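/- arXiv:2305.12360 — 7 statements merged into one kernel-verified Lean document; each statement's English description precedes it below -/
import Mathlib

section
/- Let M be a matroid on a finite set V with rank function ρ, and let 0 ≤ t ≤ ρ(V). Then the family M^t = {σ ⊆ V : ρ(σ) ≥ |σ| − t} is a matroid. -/
/-- `Ind` is (the independence predicate of) a matroid. -/
structure IsMatroid {V : Type*} [DecidableEq V] (Ind : Finset V → Prop) : Prop where
  empty : Ind ∅
  subset : ∀ ⦃σ τ : Finset V⦄, Ind τ → σ ⊆ τ → Ind σ
  exchange : ∀ ⦃A B : Finset V⦄, Ind A → Ind B → A.card < B.card →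
    ∃ x ∈ B, x ∉ A ∧ Ind (insert x A)

/-- The rank of `W`: the maximal size of an independent subset of `W`. -/
def matRank {V : Type*} [DecidableEq V] (Ind : Finset V → Prop) [DecidablePred Ind]
    (W : Finset V) : ℕ :=
  (W.powerset.filter Ind).sup Finset.card

lemma le_matRank {V : Type*} [DecidableEq V] {Ind : Finset V → Prop} [DecidablePred Ind]
    {I W : Finset V} (hI : Ind I) (hIW : I ⊆ W) : I.card ≤ matRank Ind W :=
  Finset.le_sup (by simp [Finset.mem_filter, Finset.mem_powerset, hIW, hI])

lemma exists_max {V : Type*} [DecidableEq V] {Ind : Finset V → Prop} [DecidablePred Ind]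
    (hM : IsMatroid Ind) (W : Finset V) :
    ∃ I, I ⊆ W ∧ Ind I ∧ I.card = matRank Ind W := by
  have hne : (W.powerset.filter Ind).Nonempty :=
    ⟨∅, by simp [Finset.mem_filter, hM.empty]⟩
  obtain ⟨I, hI, hcard⟩ := Finset.exists_mem_eq_sup _ hne Finset.card
  simp only [Finset.mem_filter, Finset.mem_powerset] at hI
  exact ⟨I, hI.1, hI.2, hcard.symm⟩

/-- The `t`-tolerance complex `M^t = {σ : ρ(σ) ≥ |σ| − t}` of a matroid is a matroid. -/
theorem stmt_2 {V : Type*} [DecidableEq V] [Fintype V]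
    (Ind : Finset V → Prop) [DecidablePred Ind] (hM : IsMatroid Ind)
    (t : ℕ) (ht : t ≤ matRank Ind Finset.univ) :
    IsMatroid (fun σ : Finset V => σ.card - t ≤ matRank Ind σ) := by
  constructor
  · simp
  · intro σ τ hτ hστ
    obtain ⟨I, hIτ, hI, hIcard⟩ := exists_max hM τ
    have h1 : (I ∩ σ).card ≤ matRank Ind σ :=
      le_matRank (hM.subset hI Finset.inter_subset_left) Finset.inter_subset_right
    have h2 : (I \ σ).card ≤ (τ \ σ).card :=
      Finset.card_le_card (Finset.sdiff_subset_sdiff hIτ (le_refl σ))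
    have h3 : (I ∩ σ).card + (I \ σ).card = I.card := by
      rw [Finset.card_inter_add_card_sdiff]
    have h4 : (τ \ σ).card + σ.card = τ.card := Finset.card_sdiff_add_card_eq_card hστ
    omega
  · intro A B hA hB hcard
    by_cases hslack : A.card + 1 ≤ matRank Ind A + t
    · -- any element of B \ A works
      have : (B \ A).Nonempty := by
        by_contra h
        rw [Finset.not_nonempty_iff_eq_empty, Finset.sdiff_eq_empty_iff_subset] at h
        exact absurd (Finset.card_le_card h) (by omega)
      obtain ⟨x, hx⟩ := this
      rw [Finset.mem_sdiff] at hx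
      refine ⟨x, hx.1, hx.2, ?_⟩
      have hmono : matRank Ind A ≤ matRank Ind (insert x A) := by
        obtain ⟨I, hIA, hI, hIcard⟩ := exists_max hM A
        rw [← hIcard]
        exact le_matRank hI (hIA.trans (Finset.subset_insert _ _))
      rw [Finset.card_insert_of_notMem hx.2]
      omega
    · -- tight case: matRank Ind A + t = A.card; use matroid exchange
      obtain ⟨I, hIA, hI, hIcard⟩ := exists_max hM A
      obtain ⟨J, hJB, hJ, hJcard⟩ := exists_max hM B
      have hIJ : I.card < J.card := by omega
      obtain ⟨x, hxJ, hxI, hins⟩ := hM.exchange hI hJ hIJ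
      have hxB : x ∈ B := hJB hxJ
      have hxA : x ∉ A := by
        intro hxA
        have : (insert x I).card ≤ matRank Ind A :=
          le_matRank hins (Finset.insert_subset hxA hIA)
        rw [Finset.card_insert_of_notMem hxI] at this
        omega
      refine ⟨x, hxB, hxA, ?_⟩
      have : (insert x I).card ≤ matRank Ind (insert x A) :=
        le_matRank hins (Finset.insert_subset_insert _ hIA)
      rw [Finset.card_insert_of_notMem hxI] at this
      rw [Finset.card_insert_of_notMem hxA]
      omega
end

section
/- Let X be a d-Leray simplicial complex on vertex set V, and let U ⊆ V with |U| ≥ d + 1. If every subset of U of size d + 1 is a face of X, then U is a face of X. -/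
variable {V : Type*} [DecidableEq V] [LinearOrder V]

/-- Chains with `ℤ` coefficients: formal sums of faces of `K` of cardinality `n`
(so `n = 0` corresponds to the empty face, giving the *reduced* chain complex). -/
abbrev Chains (K : Finset V → Prop) (n : ℕ) : Type _ :=
  {σ : Finset V // K σ ∧ σ.card = n} →₀ ℤ

/-- The simplicial boundary map. -/
noncomputable def bd (K : Finset V → Prop) [DecidablePred K] (n : ℕ) :
    Chains K (n + 1) →ₗ[ℤ] Chains K n :=
  Finsupp.lsum ℤ fun σ : {σ : Finset V // K σ ∧ σ.card = n + 1} =>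
    LinearMap.toSpanSingleton ℤ (Chains K n)
      (∑ v ∈ σ.1.attach,
        if h : K (σ.1.erase v.1) then
          ((-1 : ℤ) ^ ((σ.1.filter (fun w => w < v.1)).card)) •
            Finsupp.single (⟨σ.1.erase v.1, h, by
              rw [Finset.card_erase_of_mem v.2, σ.2.2]; omega⟩ :
              {τ : Finset V // K τ ∧ τ.card = n}) (1 : ℤ)
        else 0)

/-- Cycles: kernel of the boundary map (everything in the bottom degree). -/
noncomputable def cycles (K : Finset V → Prop) [DecidablePred K] :
    (n : ℕ) → Submodule ℤ (Chains K n)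
  | 0 => ⊤
  | (m + 1) => LinearMap.ker (bd K m)

/-- Reduced homology: `RHom K n` is the reduced simplicial homology of `K`
in dimension `n - 1` (so `RHom K (i+1)` is `H̃ᵢ(K)`). -/
noncomputable abbrev RHom (K : Finset V → Prop) [DecidablePred K] (n : ℕ) : Type _ :=
  (cycles K n) ⧸ (Submodule.comap (cycles K n).subtype (LinearMap.range (bd K n)))

/-- A complex is `d`-Leray if every induced subcomplex has trivial reduced homology
in dimensions `d` and higher. -/
def IsDLeray (d : ℕ) (K : Finset V → Prop) [DecidablePred K] : Prop :=
  ∀ (W : Finset V) (i : ℕ), d ≤ i →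
    Subsingleton (RHom (fun σ => K σ ∧ σ ⊆ W) (i + 1))

lemma sign_lemma {σ : Finset V} {u v : V} (hu : u ∈ σ) (hv : v ∈ σ) (huv : u ≠ v) :
    (-1 : ℤ) ^ ((σ.filter (fun w => w < v)).card) *
      (-1 : ℤ) ^ (((σ.erase v).filter (fun w => w < u)).card) +
    (-1 : ℤ) ^ ((σ.filter (fun w => w < u)).card) *
      (-1 : ℤ) ^ (((σ.erase u).filter (fun w => w < v)).card) = 0 := by
  rcases huv.lt_or_gt with hlt | hlt
  · have h1 : (σ.erase v).filter (fun w => w < u) = σ.filter (fun w => w < u) := by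
      rw [Finset.filter_erase, Finset.erase_eq_of_notMem]
      simp [Finset.mem_filter, hlt.asymm]
    have hmem : u ∈ σ.filter (fun w => w < v) := Finset.mem_filter.2 ⟨hu, hlt⟩
    have h2 : (σ.erase u).filter (fun w => w < v) = (σ.filter (fun w => w < v)).erase u :=
      by rw [Finset.filter_erase]
    obtain ⟨c, hc⟩ : ∃ c, (σ.filter (fun w => w < v)).card = c + 1 :=
      ⟨_, (Nat.succ_pred_eq_of_pos (Finset.card_pos.2 ⟨u, hmem⟩)).symm⟩
    rw [h1, h2, Finset.card_erase_of_mem hmem, hc]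
    simp [pow_succ]
    ring
  · have h1 : (σ.erase u).filter (fun w => w < v) = σ.filter (fun w => w < v) := by
      rw [Finset.filter_erase, Finset.erase_eq_of_notMem]
      simp [Finset.mem_filter, hlt.asymm]
    have hmem : v ∈ σ.filter (fun w => w < u) := Finset.mem_filter.2 ⟨hv, hlt⟩
    have h2 : (σ.erase v).filter (fun w => w < u) = (σ.filter (fun w => w < u)).erase v :=
      by rw [Finset.filter_erase]
    obtain ⟨c, hc⟩ : ∃ c, (σ.filter (fun w => w < u)).card = c + 1 :=
      ⟨_, (Nat.succ_pred_eq_of_pos (Finset.card_pos.2 ⟨v, hmem⟩)).symm⟩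
    rw [h1, h2, Finset.card_erase_of_mem hmem, hc]
    simp [pow_succ]
    ring

lemma bd_bd (K : Finset V → Prop) [DecidablePred K] (n : ℕ) (σ : Finset V)
    (hcard : σ.card = n + 2)
    (hdown : ∀ τ ⊆ σ, τ ≠ σ → K τ) :
    bd K n (∑ v ∈ σ.attach, ((-1 : ℤ) ^ ((σ.filter (fun w => w < v.1)).card)) •
      Finsupp.single (⟨σ.erase v.1,
        hdown _ (Finset.erase_subset _ _) (fun hh => absurd v.2 (Finset.erase_eq_self.mp hh)),
        by rw [Finset.card_erase_of_mem v.2, hcard]; omega⟩ :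
          {τ : Finset V // K τ ∧ τ.card = n + 1}) 1) = 0 := by
  have hKe : ∀ (v : {x // x ∈ σ}) (u : {x // x ∈ σ.erase (v : V)}),
      K ((σ.erase (v : V)).erase (u : V)) := fun v u =>
    hdown _ ((Finset.erase_subset _ _).trans (Finset.erase_subset _ _)) (by
      intro hh
      have := congrArg Finset.card hh
      rw [Finset.card_erase_of_mem u.2, Finset.card_erase_of_mem v.2, hcard] at this
      omega)
  have hc2 : ∀ (v : {x // x ∈ σ}) (u : {x // x ∈ σ.erase (v : V)}),
      ((σ.erase (v : V)).erase (u : V)).card = n := fun v u => by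
    rw [Finset.card_erase_of_mem u.2, Finset.card_erase_of_mem v.2, hcard]; omega
  rw [map_sum]
  simp only [map_smul, bd, Finsupp.lsum_single, LinearMap.toSpanSingleton_apply_one, Finset.smul_sum]
  have hrw : ∀ (v : {x // x ∈ σ}) (u : {x // x ∈ σ.erase (v : V)}),
      ((-1 : ℤ) ^ ((σ.filter (fun w => w < (v : V))).card)) •
        (dite (K ((σ.erase (v : V)).erase (u : V)))
          (fun h => ((-1 : ℤ) ^ (((σ.erase (v : V)).filter (fun w => w < (u : V))).card)) •
            Finsupp.single (⟨(σ.erase (v : V)).erase (u : V), h, hc2 v u⟩ :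
              {τ : Finset V // K τ ∧ τ.card = n}) (1 : ℤ))
          (fun _ => 0)) =
      ((-1 : ℤ) ^ ((σ.filter (fun w => w < (v : V))).card) *
        (-1 : ℤ) ^ (((σ.erase (v : V)).filter (fun w => w < (u : V))).card)) •
        Finsupp.single (⟨(σ.erase (v : V)).erase (u : V), hKe v u, hc2 v u⟩ :
          {τ : Finset V // K τ ∧ τ.card = n}) (1 : ℤ) := by
    intro v u
    rw [dif_pos (hKe v u), smul_smul]
  simp only [hrw]
  rw [Finset.sum_sigma']
  refine Finset.sum_involution
    (fun p _ => ⟨⟨(p.2 : V), Finset.mem_of_mem_erase p.2.2⟩,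
      ⟨(p.1 : V), Finset.mem_erase.2 ⟨(Finset.mem_erase.1 p.2.2).1.symm, p.1.2⟩⟩⟩)
    ?_ ?_ (fun p _ => Finset.mem_sigma.2 ⟨Finset.mem_attach _ _, Finset.mem_attach _ _⟩)
    (fun p _ => rfl)
  · rintro ⟨v, u⟩ hp
    have hu : (u : V) ∈ σ := Finset.mem_of_mem_erase u.2
    have hne : (u : V) ≠ (v : V) := (Finset.mem_erase.1 u.2).1
    have hE : (σ.erase (u : V)).erase (v : V) = (σ.erase (v : V)).erase (u : V) :=
      Finset.erase_right_comm
    simp only [hE]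
    rw [← add_smul, sign_lemma hu v.2 hne, zero_smul]
  · rintro ⟨v, u⟩ hp hf hq
    exact (Finset.mem_erase.1 u.2).1 (congrArg (fun x => (x.1 : V)) hq)

/-- Helly's theorem for `d`-Leray complexes: if every subset of `U` of size `d+1`
is a face of the `d`-Leray complex `X`, and `|U| ≥ d+1`, then `U` is a face of `X`. -/
theorem stmt_5 {V : Type*} [DecidableEq V] [LinearOrder V] [Fintype V]
    (d : ℕ) (K : Finset V → Prop) [DecidablePred K]
    (hcomplex : ∀ ⦃σ τ : Finset V⦄, K τ → σ ⊆ τ → K σ)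
    (hLeray : IsDLeray d K)
    (U : Finset V) (hU : d + 1 ≤ U.card)
    (h : ∀ σ ⊆ U, σ.card = d + 1 → K σ) :
    K U := by
  have key : ∀ m : ℕ, ∀ W : Finset V, W ⊆ U → W.card = m → K W := by
    intro m
    induction m using Nat.strong_induction_on with
    | _ m ih =>
      intro W hWU hWm
      rcases le_or_gt W.card (d + 1) with hle | hgt
      · obtain ⟨W', hWW', hW'U, hc'⟩ := Finset.exists_subsuperset_card_eq hWU hle hU
        exact hcomplex (h W' hW'U hc') hWW'
      · by_contra hKW
        obtain ⟨k, hk, hdk⟩ : ∃ k, W.card = k + 2 ∧ d ≤ k := ⟨W.card - 2, by omega, by omega⟩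
        have hdown : ∀ τ ⊆ W, τ ≠ W → (K τ ∧ τ ⊆ W) := by
          intro τ hτ hne
          refine ⟨ih τ.card ?_ τ (hτ.trans hWU) rfl, hτ⟩
          have := Finset.card_lt_card (Finset.ssubset_iff_subset_ne.2 ⟨hτ, hne⟩)
          omega
        have hz := bd_bd (fun σ : Finset V => K σ ∧ σ ⊆ W) k W hk hdown
        set z : Chains (fun σ : Finset V => K σ ∧ σ ⊆ W) (k + 1) :=
          ∑ v ∈ W.attach, ((-1 : ℤ) ^ ((W.filter (fun w => w < v.1)).card)) •
            Finsupp.single (⟨W.erase v.1,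
              hdown _ (Finset.erase_subset _ _)
                (fun hh => absurd v.2 (Finset.erase_eq_self.mp hh)),
              by rw [Finset.card_erase_of_mem v.2, hk]; omega⟩ :
                {τ : Finset V // (K τ ∧ τ ⊆ W) ∧ τ.card = k + 1}) 1 with hzdef
        have hzmem : z ∈ cycles (fun σ : Finset V => K σ ∧ σ ⊆ W) (k + 1) := by
          show z ∈ LinearMap.ker (bd (fun σ : Finset V => K σ ∧ σ ⊆ W) k)
          exact LinearMap.mem_ker.2 hz
        have hsub : Subsingleton (RHom (fun σ : Finset V => K σ ∧ σ ⊆ W) (k + 1)) :=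
          hLeray W k hdk
        have htop := Submodule.Quotient.subsingleton_iff.mp hsub
        have hmem : (⟨z, hzmem⟩ : cycles (fun σ : Finset V => K σ ∧ σ ⊆ W) (k + 1)) ∈
            Submodule.comap (cycles (fun σ : Finset V => K σ ∧ σ ⊆ W) (k + 1)).subtype
              (LinearMap.range (bd (fun σ : Finset V => K σ ∧ σ ⊆ W) (k + 1))) := by
          rw [htop]; exact Submodule.mem_top
        obtain ⟨c, hc⟩ := Submodule.mem_comap.mp hmem
        have hcz : c = 0 := by
          ext a
          obtain ⟨τ, ⟨⟨hKτ, hτW⟩, hcτ⟩⟩ := a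
          exact absurd (Finset.eq_of_subset_of_card_le hτW (by rw [hcτ, hk]) ▸ hKτ) hKW
        have hz0 : z = 0 := by
          have h2 : bd (fun σ : Finset V => K σ ∧ σ ⊆ W) (k + 1) c = z := hc
          rw [hcz, map_zero] at h2
          exact h2.symm
        obtain ⟨v0, hv0⟩ := Finset.card_pos.mp (show 0 < W.card by omega)
        have happ : z (⟨W.erase v0,
            hdown _ (Finset.erase_subset _ _)
              (fun hh => absurd hv0 (Finset.erase_eq_self.mp hh)),
            by rw [Finset.card_erase_of_mem hv0, hk]; omega⟩ :
              {τ : Finset V // (K τ ∧ τ ⊆ W) ∧ τ.card = k + 1}) =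
            (-1 : ℤ) ^ ((W.filter (fun w => w < v0)).card) := by
          rw [hzdef, Finsupp.finset_sum_apply,
            Finset.sum_eq_single (⟨v0, hv0⟩ : {x // x ∈ W})]
          · simp [Finsupp.single_apply]
          · intro b _ hb
            have hne : W.erase (b : V) ≠ W.erase v0 :=
              fun e => hb (Subtype.ext ((Finset.erase_inj W b.2).mp e))
            simp [Finsupp.single_apply, Subtype.ext_iff, hne]
          · intro hh
            exact absurd (Finset.mem_attach _ _) hh
        rw [hz0] at happ
        simp only [Finsupp.coe_zero, Pi.zero_apply] at happ
        exact pow_ne_zero _ (by norm_num : (-1 : ℤ) ≠ 0) happ.symm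
  exact key U.card U (Finset.Subset.refl U) rfl
end

section
/- A simplicial complex X is d-collapsible if and only if there is a sequence of elementary d-collapses X = X₁ → X₂ → ⋯ → X_t such that the free face in each elementary d-collapse has size exactly d, and dim(X_t) < d − 1. -/
variable {V : Type*} [DecidableEq V]

/-- `τ` is a maximal face of the complex `K`. -/
def IsMaximalFace (K : Finset V → Prop) (τ : Finset V) : Prop :=
  K τ ∧ ∀ η, K η → τ ⊆ η → η = τ

/-- `σ` is a free face of `K`: a face contained in a unique maximal face. -/
def IsFreeFace (K : Finset V → Prop) (σ : Finset V) : Prop :=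
  K σ ∧ ∃! τ, IsMaximalFace K τ ∧ σ ⊆ τ

/-- An elementary `d`-collapse `K → K'`: remove all faces containing a free face of
size at most `d`. -/
def ElemCollapse (d : ℕ) (K K' : Finset V → Prop) : Prop :=
  ∃ σ : Finset V, IsFreeFace K σ ∧ σ.card ≤ d ∧ ∀ η, (K' η ↔ K η ∧ ¬ σ ⊆ η)

/-- `K` is `d`-collapsible: a sequence of elementary `d`-collapses reduces `K` to
the void complex. -/
def DCollapsible (d : ℕ) (K : Finset V → Prop) : Prop :=
  Relation.ReflTransGen (ElemCollapse d) K (fun _ => False)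

/-! ### Auxiliary machinery -/

def ExactStep (d : ℕ) (K K' : Finset V → Prop) : Prop :=
  ∃ σ : Finset V, IsFreeFace K σ ∧ σ.card = d ∧ ∀ η, (K' η ↔ K η ∧ ¬ σ ⊆ η)

def ExactChain (d : ℕ) : (Finset V → Prop) → (Finset V → Prop) → Prop :=
  Relation.ReflTransGen (ExactStep d)

lemma pred_ext {A B : Finset V → Prop} (h : ∀ η, A η ↔ B η) : A = B :=
  funext fun η => propext (h η)

lemma chain_congr {d : ℕ} {A B B' : Finset V → Prop} (h : ExactChain d A B)
    (hBB' : ∀ η, B η ↔ B' η) : ExactChain d A B' := pred_ext hBB' ▸ h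

lemma chain_congr_left {d : ℕ} {A A' B : Finset V → Prop} (h : ExactChain d A B)
    (hAA' : ∀ η, A η ↔ A' η) : ExactChain d A' B := pred_ext hAA' ▸ h

lemma exists_maximal_above [Fintype V] {F : Finset V → Prop} {η : Finset V} (h : F η) :
    ∃ μ, IsMaximalFace F μ ∧ η ⊆ μ := by
  obtain ⟨μ, hμ, hmax⟩ := Set.Finite.exists_maximalFor (fun s : Finset V => s.card)
    {ν | F ν ∧ η ⊆ ν} (Set.toFinite _) ⟨η, h, subset_rfl⟩
  refine ⟨μ, ⟨hμ.1, fun ν hν hμν => ?_⟩, hμ.2⟩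
  have hνmem : ν ∈ {ν | F ν ∧ η ⊆ ν} := ⟨hν, hμ.2.trans hμν⟩
  have hcard := hmax hνmem (Finset.card_le_card hμν)
  exact (Finset.eq_of_subset_of_card_le hμν hcard).symm ▸ rfl

lemma free_face_bound [Fintype V] {X : Finset V → Prop} {σ τ : Finset V}
    (hfree : IsFreeFace X σ) (hτ : IsMaximalFace X τ ∧ σ ⊆ τ) :
    ∀ η, X η → σ ⊆ η → η ⊆ τ := by
  intro η hη hσ
  obtain ⟨μ, hμmax, hημ⟩ := exists_maximal_above hη
  have : μ = τ := hfree.2.unique ⟨hμmax, hσ.trans hημ⟩ hτ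
  exact this ▸ hημ

lemma downClosed_step {X X' : Finset V → Prop} {σ : Finset V}
    (hdc : ∀ ⦃a b : Finset V⦄, X b → a ⊆ b → X a)
    (h : ∀ η, X' η ↔ X η ∧ ¬ σ ⊆ η) :
    ∀ ⦃a b : Finset V⦄, X' b → a ⊆ b → X' a := by
  intro a b hb hab
  obtain ⟨hXb, hnb⟩ := (h b).1 hb
  exact (h a).2 ⟨hdc hXb hab, fun hσa => hnb (hσa.trans hab)⟩

/-! ### Single collapse lemmas -/

lemma collapse_at_sigma [Fintype V] {d : ℕ} {F : Finset V → Prop} {σ τ : Finset V}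
    (hστ : σ ⊆ τ) (hσd : σ.card = d)
    (hfull : ∀ η, σ ⊆ η → η ⊆ τ → F η)
    (hbound : ∀ η, F η → d ≤ η.card → σ ⊆ η → η ⊆ τ) :
    ExactChain d F (fun η => F η ∧ ¬ (σ ⊆ η ∧ d ≤ η.card)) := by
  have hcard : ∀ η, σ ⊆ η → d ≤ η.card := fun η hs => hσd ▸ Finset.card_le_card hs
  have hbd : ∀ η, F η → σ ⊆ η → η ⊆ τ := fun η hF hs => hbound η hF (hcard η hs) hs
  have hFσ : F σ := hfull σ subset_rfl hστ
  have hFτ : F τ := hfull τ hστ subset_rfl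
  have hmaxτ : IsMaximalFace F τ :=
    ⟨hFτ, fun η hη hτη => subset_antisymm (hbd η hη (hστ.trans hτη)) hτη⟩
  have hfree : IsFreeFace F σ := by
    refine ⟨hFσ, τ, ⟨hmaxτ, hστ⟩, ?_⟩
    rintro τ' ⟨hm', hστ'⟩
    exact (hm'.2 τ hFτ (hbd τ' hm'.1 hστ')).symm
  have step : ExactStep d F (fun η => F η ∧ ¬ σ ⊆ η) := ⟨σ, hfree, hσd, fun η => Iff.rfl⟩
  refine chain_congr (Relation.ReflTransGen.single step) fun η => ?_
  constructor
  · rintro ⟨hF, hn⟩; exact ⟨hF, fun h => hn h.1⟩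
  · rintro ⟨hF, hn⟩; exact ⟨hF, fun hs => hn ⟨hs, hcard η hs⟩⟩

lemma collapse_at_tau [Fintype V] {d : ℕ} {F : Finset V → Prop} {σ τ : Finset V}
    (hστ : σ ⊆ τ) (hτd : τ.card = d)
    (hfull : ∀ η, σ ⊆ η → η ⊆ τ → F η)
    (hbound : ∀ η, F η → d ≤ η.card → σ ⊆ η → η ⊆ τ) :
    ExactChain d F (fun η => F η ∧ ¬ (σ ⊆ η ∧ d ≤ η.card)) := by
  have hFτ : F τ := hfull τ hστ subset_rfl
  have hmaxτ : IsMaximalFace F τ := by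
    refine ⟨hFτ, fun η hη hτη => ?_⟩
    refine subset_antisymm (hbound η hη ?_ (hστ.trans hτη)) hτη
    exact hτd ▸ Finset.card_le_card hτη
  have hfree : IsFreeFace F τ := by
    refine ⟨hFτ, τ, ⟨hmaxτ, subset_rfl⟩, ?_⟩
    rintro τ' ⟨hm', hττ'⟩
    exact hmaxτ.2 τ' hm'.1 hττ'
  have step : ExactStep d F (fun η => F η ∧ ¬ τ ⊆ η) := ⟨τ, hfree, hτd, fun η => Iff.rfl⟩
  refine chain_congr (Relation.ReflTransGen.single step) fun η => ?_
  constructor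
  · rintro ⟨hF, hn⟩
    refine ⟨hF, fun h => hn ?_⟩
    have hsub : η ⊆ τ := hbound η hF h.2 h.1
    have : η = τ := Finset.eq_of_subset_of_card_le hsub (by omega)
    exact this ▸ subset_rfl
  · rintro ⟨hF, hn⟩
    exact ⟨hF, fun hs => hn ⟨hστ.trans hs, hτd ▸ Finset.card_le_card hs⟩⟩

/-! ### Interval removal lemma -/

lemma interval_removal [Fintype V] {d : ℕ} :
    ∀ (n : ℕ) (F : Finset V → Prop) (σ τ : Finset V), (τ \ σ).card ≤ n → σ ⊆ τ →
      σ.card ≤ d → d ≤ τ.card →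
      (∀ η, σ ⊆ η → η ⊆ τ → F η) →
      (∀ η, F η → d ≤ η.card → σ ⊆ η → η ⊆ τ) →
      ExactChain d F (fun η => F η ∧ ¬ (σ ⊆ η ∧ d ≤ η.card)) := by
  intro n
  induction n with
  | zero =>
    intro F σ τ hn hστ hσd hτd hfull hbound
    have hτσ : τ ⊆ σ := by
      have : τ \ σ = ∅ := Finset.card_eq_zero.mp (le_antisymm hn (Nat.zero_le _))
      rwa [Finset.sdiff_eq_empty_iff_subset] at this
    have hcard : σ.card = d :=
      le_antisymm hσd (hτd.trans (Finset.card_le_card hτσ))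
    exact collapse_at_sigma hστ hcard hfull hbound
  | succ n ih =>
    intro F σ τ hn hστ hσd hτd hfull hbound
    rcases eq_or_lt_of_le hσd with hσeq | hσlt
    · exact collapse_at_sigma hστ hσeq hfull hbound
    rcases eq_or_lt_of_le hτd with hτeq | hτlt
    · exact collapse_at_tau hστ hτeq.symm hfull hbound
    -- recursive case: σ.card < d < τ.card
    obtain ⟨v, hvτ, hvσ⟩ : ∃ v, v ∈ τ ∧ v ∉ σ := by
      have hns : ¬ τ ⊆ σ := fun h =>
        absurd (Finset.card_le_card h) (by omega)
      obtain ⟨v, hv1, hv2⟩ := Finset.not_subset.mp hns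
      exact ⟨v, hv1, hv2⟩
    have hvsd : v ∈ τ \ σ := Finset.mem_sdiff.mpr ⟨hvτ, hvσ⟩
    -- first call : free faces containing v
    have hm1 : (τ \ insert v σ).card ≤ n := by
      rw [Finset.sdiff_insert, Finset.card_erase_of_mem hvsd]
      omega
    have call1 := ih F (insert v σ) τ hm1 (Finset.insert_subset hvτ hστ)
      (by rw [Finset.card_insert_of_notMem hvσ]; omega) hτd
      (fun η h1 h2 => hfull η ((Finset.subset_insert v σ).trans h1) h2)
      (fun η hF hc hs => hbound η hF hc ((Finset.subset_insert v σ).trans hs))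
    set F₁ := fun η => F η ∧ ¬ (insert v σ ⊆ η ∧ d ≤ η.card) with hF₁
    -- second call : free faces avoiding v
    have hm2 : (τ.erase v \ σ).card ≤ n := by
      rw [Finset.erase_sdiff_comm, Finset.card_erase_of_mem hvsd]
      omega
    have hστ' : σ ⊆ τ.erase v := Finset.subset_erase.mpr ⟨hστ, hvσ⟩
    have hτ'd : d ≤ (τ.erase v).card := by
      rw [Finset.card_erase_of_mem hvτ]; omega
    have hfull1 : ∀ η, σ ⊆ η → η ⊆ τ.erase v → F₁ η := by
      intro η h1 h2
      refine ⟨hfull η h1 (h2.trans (Finset.erase_subset v τ)), ?_⟩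
      rintro ⟨hins, -⟩
      exact (Finset.mem_erase.mp (h2 (hins (Finset.mem_insert_self v σ)))).1 rfl
    have hbound1 : ∀ η, F₁ η → d ≤ η.card → σ ⊆ η → η ⊆ τ.erase v := by
      rintro η ⟨hF, hn1⟩ hc hs
      have hsubτ : η ⊆ τ := hbound η hF hc hs
      refine Finset.subset_erase.mpr ⟨hsubτ, fun hv => ?_⟩
      exact hn1 ⟨Finset.insert_subset hv hs, hc⟩
    have call2 := ih F₁ σ (τ.erase v) hm2 hστ' hσd hτ'd hfull1 hbound1
    refine chain_congr (call1.trans call2) fun η => ?_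
    constructor
    · rintro ⟨⟨hF, -⟩, h2⟩; exact ⟨hF, h2⟩
    · rintro ⟨hF, h2⟩
      exact ⟨⟨hF, fun ⟨hs, hp⟩ => h2 ⟨(Finset.subset_insert v σ).trans hs, hp⟩⟩, h2⟩

/-! ### Forward direction -/

lemma exact_of_collapsible [Fintype V] {d : ℕ} {X : Finset V → Prop}
    (h : DCollapsible d X) :
    (∀ ⦃a b : Finset V⦄, X b → a ⊆ b → X a) →
    ∀ (S : Finset V → Prop), (∀ η, S η → η.card < d) →
    ExactChain d (fun η => X η ∨ S η) (fun η => (X η ∧ η.card < d) ∨ S η) := by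
  induction h using Relation.ReflTransGen.head_induction_on with
  | refl =>
    intro _ S hS
    refine chain_congr_left (Relation.ReflTransGen.refl) fun η => ?_
    constructor
    · rintro (⟨h, -⟩ | h); exacts [h.elim, Or.inr h]
    · rintro (h | h); exacts [h.elim, Or.inr h]
  | head h' hchain ih =>
    rename_i X X'
    intro hdc S hS
    obtain ⟨σ, hfree, hσd, hX'⟩ := h'
    obtain ⟨τ, hτ, -⟩ := hfree.2
    have hbd := free_face_bound hfree hτ
    have hdc' := downClosed_step hdc hX'
    set S₂ := fun η => S η ∨ (X η ∧ σ ⊆ η ∧ η.card < d) with hS₂def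
    have hS₂ : ∀ η, S₂ η → η.card < d := by
      rintro η (h | ⟨-, -, h⟩); exacts [hS η h, h]
    have ihc := ih hdc' S₂ hS₂
    have eq2 : ∀ η, ((X' η ∧ η.card < d) ∨ S₂ η) ↔ ((X η ∧ η.card < d) ∨ S η) := by
      intro η
      constructor
      · rintro (⟨hXp, hlt⟩ | hs | ⟨hX, -, hlt⟩)
        · exact Or.inl ⟨((hX' η).1 hXp).1, hlt⟩
        · exact Or.inr hs
        · exact Or.inl ⟨hX, hlt⟩
      · rintro (⟨hX, hlt⟩ | hs)
        · by_cases hσ : σ ⊆ η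
          · exact Or.inr (Or.inr ⟨hX, hσ, hlt⟩)
          · exact Or.inl ⟨(hX' η).2 ⟨hX, hσ⟩, hlt⟩
        · exact Or.inr (Or.inl hs)
    by_cases hτd : d ≤ τ.card
    · have hchain1 := interval_removal ((τ \ σ).card) (fun η => X η ∨ S η) σ τ le_rfl
        hτ.2 hσd hτd
        (fun η h1 h2 => Or.inl (hdc hτ.1.1 h2))
        (by
          rintro η (hX | hs) hc hσ
          · exact hbd η hX hσ
          · exact absurd (hS η hs) (not_lt.mpr hc))
      have eq1 : ∀ η, ((X η ∨ S η) ∧ ¬ (σ ⊆ η ∧ d ≤ η.card)) ↔ (X' η ∨ S₂ η) := by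
        intro η
        constructor
        · rintro ⟨hXS, hn⟩
          rcases hXS with hX | hs
          · by_cases hσ : σ ⊆ η
            · exact Or.inr (Or.inr ⟨hX, hσ, lt_of_not_ge fun hd => hn ⟨hσ, hd⟩⟩)
            · exact Or.inl ((hX' η).2 ⟨hX, hσ⟩)
          · exact Or.inr (Or.inl hs)
        · rintro (hX'' | hs | ⟨hX, hσ, hlt⟩)
          · obtain ⟨hX, hnσ⟩ := (hX' η).1 hX''
            exact ⟨Or.inl hX, fun h => hnσ h.1⟩
          · exact ⟨Or.inr hs, fun h => absurd (hS η hs) (not_lt.mpr h.2)⟩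
          · exact ⟨Or.inl hX, fun h => absurd hlt (not_lt.mpr h.2)⟩
      exact (chain_congr hchain1 eq1).trans (chain_congr ihc eq2)
    · have eq1' : ∀ η, (X η ∨ S η) ↔ (X' η ∨ S₂ η) := by
        intro η
        constructor
        · rintro (hX | hs)
          · by_cases hσ : σ ⊆ η
            · refine Or.inr (Or.inr ⟨hX, hσ, ?_⟩)
              have := Finset.card_le_card (hbd η hX hσ)
              omega
            · exact Or.inl ((hX' η).2 ⟨hX, hσ⟩)
          · exact Or.inr (Or.inl hs)
        · rintro (hX'' | hs | ⟨hX, -, -⟩)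
          · exact Or.inl ((hX' η).1 hX'').1
          · exact Or.inr hs
          · exact Or.inl hX
      exact chain_congr (chain_congr_left ihc (fun η => (eq1' η).symm)) eq2

lemma indexed_cons {d : ℕ} {A C B : Finset V → Prop} (h' : ExactStep d A C)
    (ih : ∃ (t : ℕ) (X : ℕ → Finset V → Prop), X 0 = C ∧
      (∀ i < t, ExactStep d (X i) (X (i + 1))) ∧ X t = B) :
    ∃ (t : ℕ) (X : ℕ → Finset V → Prop), X 0 = A ∧
      (∀ i < t, ExactStep d (X i) (X (i + 1))) ∧ X t = B := by
  obtain ⟨t, X, h0, hstep, ht⟩ := ih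
  refine ⟨t + 1, fun n => Nat.casesOn n A (fun m => X m), rfl, ?_, ht⟩
  intro i hi
  cases i with
  | zero => show ExactStep d A (X 0); rw [h0]; exact h'
  | succ j => exact hstep j (by omega)

lemma chain_to_indexed {d : ℕ} {A B : Finset V → Prop} (h : ExactChain d A B) :
    ∃ (t : ℕ) (X : ℕ → Finset V → Prop), X 0 = A ∧
      (∀ i < t, ExactStep d (X i) (X (i + 1))) ∧ X t = B := by
  induction h using Relation.ReflTransGen.head_induction_on with
  | refl => exact ⟨0, fun _ => B, rfl, fun i h => absurd h (Nat.not_lt_zero i), rfl⟩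
  | head h' hchain ih => exact indexed_cons h' ih

/-! ### Backward direction: peeling lemma -/

lemma collapsible_of_small [Fintype V] {d : ℕ} :
    ∀ (n : ℕ) (F : Finset V → Prop), {η | F η}.ncard ≤ n → (∀ η, F η → η.card ≤ d) →
    DCollapsible d F := by
  intro n
  induction n with
  | zero =>
    intro F hn hd
    have hempty : {η | F η} = ∅ :=
      (Set.ncard_eq_zero (Set.toFinite _)).mp (le_antisymm hn (Nat.zero_le _))
    have : F = fun _ => False := pred_ext fun η =>
      ⟨fun h => (Set.eq_empty_iff_forall_notMem.mp hempty η h), False.elim⟩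
    rw [DCollapsible, this]
  | succ n ih =>
    intro F hn hd
    by_cases hne : ∃ η, F η
    · obtain ⟨η, hη⟩ := hne
      obtain ⟨μ, hμmax, -⟩ := exists_maximal_above hη
      set F' := fun η => F η ∧ ¬ μ ⊆ η with hF'
      have hset : {η | F' η} = {η | F η} \ {μ} := by
        ext ν
        simp only [Set.mem_setOf_eq, Set.mem_diff, Set.mem_singleton_iff, hF']
        constructor
        · rintro ⟨h1, h2⟩; exact ⟨h1, fun h => h2 (h ▸ subset_rfl)⟩
        · rintro ⟨h1, h2⟩
          exact ⟨h1, fun hs => h2 (hμmax.2 ν h1 hs)⟩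
      have hμmem : μ ∈ {η | F η} := hμmax.1
      have hn' : {η | F' η}.ncard ≤ n := by
        rw [hset, Set.ncard_diff_singleton_of_mem hμmem]
        omega
      have hstep : ElemCollapse d F F' := by
        refine ⟨μ, ⟨hμmax.1, μ, ⟨hμmax, subset_rfl⟩, ?_⟩, hd μ hμmax.1, fun η => Iff.rfl⟩
        rintro τ' ⟨hm', hμτ'⟩
        exact hμmax.2 τ' hm'.1 hμτ'
      exact Relation.ReflTransGen.head hstep (ih F' hn' (fun η h => hd η h.1))
    · push_neg at hne
      have : F = fun _ => False := pred_ext fun η => ⟨hne η, False.elim⟩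
      rw [DCollapsible, this]

/-! ### Main theorem -/

/-- (Tancer) A simplicial complex is `d`-collapsible iff there is a sequence of
elementary `d`-collapses, each with free face of size exactly `d`, ending at a
complex of dimension `< d - 1` (i.e. all of whose faces have fewer than `d` vertices). -/
theorem stmt_8 {V : Type*} [DecidableEq V] [Fintype V]
    (d : ℕ) (K : Finset V → Prop)
    (hcomplex : ∀ ⦃σ τ : Finset V⦄, K τ → σ ⊆ τ → K σ) :
    DCollapsible d K ↔
      ∃ (t : ℕ) (X : ℕ → (Finset V → Prop)),
        X 0 = K ∧
        (∀ i < t, ∃ σ : Finset V, IsFreeFace (X i) σ ∧ σ.card = d ∧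
          ∀ η, (X (i + 1) η ↔ X i η ∧ ¬ σ ⊆ η)) ∧
        (∀ σ, X t σ → σ.card < d) := by
  constructor
  · intro h
    have h1 := exact_of_collapsible h hcomplex (fun _ => False) (fun η h => h.elim)
    have h2 : ExactChain d K (fun η => K η ∧ η.card < d) := by
      refine chain_congr_left (chain_congr h1 fun η => ?_) fun η => ?_
      · constructor
        · rintro (h | h); exacts [h, h.elim]
        · exact Or.inl
      · constructor
        · rintro (h | h); exacts [h, h.elim]
        · exact Or.inl
    obtain ⟨t, X, h0, hstep, ht⟩ := chain_to_indexed h2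
    refine ⟨t, X, h0, hstep, fun σ hσ => ?_⟩
    rw [ht] at hσ
    exact hσ.2
  · rintro ⟨t, X, h0, hstep, hsmall⟩
    have hchain : ∀ j, j ≤ t → Relation.ReflTransGen (ElemCollapse d) K (X j) := by
      intro j
      induction j with
      | zero => intro _; exact h0 ▸ Relation.ReflTransGen.refl
      | succ j ihj =>
        intro hj
        obtain ⟨σ, hf, hc, hiff⟩ := hstep j (by omega)
        exact (ihj (by omega)).tail ⟨σ, hf, hc.le, hiff⟩
    have hend : DCollapsible d (X t) :=
      collapsible_of_small ({η | X t η}.ncard) (X t) le_rfl (fun η h => (hsmall η h).le)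
    exact (hchain t le_rfl).trans hend
end

section
/- Let d ≥ 1, r ≥ d+1, 1 ≤ m ≤ r, and m ≤ k ≤ min{m+d, r} be integers. Let V be a finite set with |V| ≥ max{m+d, r}. Let X be a d-collapsible simplicial complex on V, and M a matroid of rank r on V with rank function ρ. Assume that for every set U = {u₁,…,u_d, v₁,…,v_m} ⊆ V of d+m distinct elements with ρ(U) ≥ k, there is some i ∈ [m] such that {u₁,…,u_d, v_i} ∈ X. Then there is a face τ ∈ X such that ρ(τ) ≥ r + 1 − m and ρ(V \ τ) ≤ k − 1. -/
variable {V : Type*} [DecidableEq V]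

section Aux

variable {Ind : Finset V → Prop} [DecidablePred Ind]

lemma card_le_matRank {A W : Finset V} (hA : Ind A) (hAW : A ⊆ W) :
    A.card ≤ matRank Ind W :=
  Finset.le_sup (by simp [Finset.mem_filter, Finset.mem_powerset, hA, hAW])

lemma matRank_le_card (W : Finset V) : matRank Ind W ≤ W.card :=
  Finset.sup_le fun A hA => by
    simp only [Finset.mem_filter, Finset.mem_powerset] at hA
    exact Finset.card_le_card hA.1

lemma exists_basis (hM : IsMatroid Ind) (W : Finset V) :
    ∃ B, B ⊆ W ∧ Ind B ∧ B.card = matRank Ind W := by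
  obtain ⟨B, hB, hBc⟩ := Finset.exists_mem_eq_sup (W.powerset.filter Ind)
    ⟨∅, by simp [hM.empty]⟩ Finset.card
  simp only [Finset.mem_filter, Finset.mem_powerset] at hB
  exact ⟨B, hB.1, hB.2, hBc.symm⟩

lemma matRank_mono {W W' : Finset V} (h : W ⊆ W') : matRank Ind W ≤ matRank Ind W' :=
  Finset.sup_le fun A hA => by
    simp only [Finset.mem_filter, Finset.mem_powerset] at hA
    exact card_le_matRank hA.2 (hA.1.trans h)

/-- Extend an independent subset of `W` to any size up to the rank of `W`. -/
lemma exists_extend (hM : IsMatroid Ind) {A W : Finset V} (hA : Ind A) (hAW : A ⊆ W)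
    {n : ℕ} (hn : A.card ≤ n) (hnr : n ≤ matRank Ind W) :
    ∃ B, A ⊆ B ∧ B ⊆ W ∧ Ind B ∧ B.card = n := by
  obtain ⟨j, rfl⟩ := Nat.exists_eq_add_of_le hn
  clear hn
  induction j generalizing A with
  | zero => exact ⟨A, Finset.Subset.refl A, hAW, hA, rfl⟩
  | succ j ih =>
    obtain ⟨C, hCW, hC, hCc⟩ := exists_basis hM W
    have hlt : A.card < C.card := by omega
    obtain ⟨x, hxC, hxA, hxI⟩ := hM.exchange hA hC hlt
    have hcard : (insert x A).card = A.card + 1 := Finset.card_insert_of_notMem hxA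
    obtain ⟨B, hAB, hBW, hB, hBc⟩ := ih hxI (Finset.insert_subset (hCW hxC) hAW)
      (by omega)
    exact ⟨B, (Finset.subset_insert x A).trans hAB, hBW, hB, by omega⟩

lemma matRank_le_add (hM : IsMatroid Ind) {A B : Finset V} (h : A ⊆ B) :
    matRank Ind B ≤ matRank Ind A + (B \ A).card :=
  Finset.sup_le fun I hI => by
    simp only [Finset.mem_filter, Finset.mem_powerset] at hI
    have h1 : (I ∩ A).card ≤ matRank Ind A :=
      card_le_matRank (hM.subset hI.2 Finset.inter_subset_left) Finset.inter_subset_right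
    have h2 : (I \ A).card ≤ (B \ A).card :=
      Finset.card_le_card (Finset.sdiff_subset_sdiff hI.1 (Finset.Subset.refl A))
    have h3 : I.card = (I ∩ A).card + (I \ A).card := by
      rw [Finset.card_inter_add_card_sdiff]
    omega

lemma mem_of_indep_inter (hM : IsMatroid Ind) {J B σ : Finset V} (hJ : Ind J)
    (hBJ : B ⊆ J) (hBσ : B ⊆ σ) (hcard : matRank Ind σ ≤ B.card) : J ∩ σ ⊆ B := by
  intro x hx
  simp only [Finset.mem_inter] at hx
  by_contra hxB
  have hI : Ind (insert x B) := hM.subset hJ (Finset.insert_subset hx.1 hBJ)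
  have hsub : insert x B ⊆ σ := Finset.insert_subset hx.2 hBσ
  have := card_le_matRank hI hsub
  rw [Finset.card_insert_of_notMem hxB] at this
  omega

/-- Construction for Part 2: if `ρ(τ₀) + m ≤ r`, build a violating pair. -/
lemma constructC2 [Fintype V] (hM : IsMatroid Ind) {d r m k : ℕ} {σ τ₀ : Finset V}
    (hrank : matRank Ind Finset.univ = r)
    (hστ : σ ⊆ τ₀) (hσd : σ.card ≤ d)
    (hcork : k + σ.card ≤ matRank Ind σ + d + m)
    (hkr : k ≤ r) (hVc : m + d ≤ Fintype.card V)
    (hτr : matRank Ind τ₀ + m ≤ r) :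
    ∃ S T : Finset V, Disjoint S T ∧ S.card = d ∧ T.card = m ∧ σ ⊆ S ∧
      Disjoint T τ₀ ∧ k ≤ matRank Ind (S ∪ T) := by
  obtain ⟨Bσ, hBσσ, hBσI, hBσc⟩ := exists_basis hM σ
  have hρσsecurely : matRank Ind σ ≤ matRank Ind τ₀ := matRank_mono hστ
  obtain ⟨Bτ, hBσBτ, hBττ, hBτI, hBτc⟩ :=
    exists_extend (n := matRank Ind τ₀) hM hBσI (hBσσ.trans hστ) (by omega) (le_refl _)
  obtain ⟨F, hBτF, hFuniv, hFI, hFc⟩ :=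
    exists_extend (n := matRank Ind τ₀ + m) hM hBτI (Finset.subset_univ _) (by omega) (by omega)
  set T := F \ Bτ with hTdef
  have hTc : T.card = m := by
    rw [Finset.card_sdiff_of_subset hBτF]; omega
  have hFτ : F ∩ τ₀ ⊆ Bτ := mem_of_indep_inter hM hFI hBτF hBττ (by omega)
  have hTτ : Disjoint T τ₀ := by
    rw [Finset.disjoint_left]
    intro x hxT hxτ
    rcases Finset.mem_sdiff.mp hxT with ⟨hxF, hxBτ⟩
    exact hxBτ (hFτ (Finset.mem_inter.mpr ⟨hxF, hxτ⟩))
  have hBσT : Disjoint Bσ T := (hTτ.symm.mono_left (hBσσ.trans hστ))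
  have hBσTsub : Bσ ∪ T ⊆ F := Finset.union_subset (hBσBτ.trans hBτF) Finset.sdiff_subset
  have hBσTI : Ind (Bσ ∪ T) := hM.subset hFI hBσTsub
  have hBσTc : (Bσ ∪ T).card = matRank Ind σ + m := by
    rw [Finset.card_union_of_disjoint hBσT]; omega
  set g := max k (matRank Ind σ + m) with hgdef
  have hgr : g ≤ matRank Ind Finset.univ := by
    rw [hrank]
    rcases max_cases k (matRank Ind σ + m) with ⟨h1, h2⟩ | ⟨h1, h2⟩ <;> omega
  obtain ⟨G, hBσTG, hGuniv, hGI, hGc⟩ :=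
    exists_extend hM hBσTI (Finset.subset_univ _) (by rw [hBσTc]; exact le_max_right _ _) hgr
  set A := G \ (Bσ ∪ T) with hAdef
  have hAc : A.card = g - (matRank Ind σ + m) := by
    rw [hAdef, Finset.card_sdiff_of_subset hBσTG]; omega
  have hσAc : (σ ∪ A).card ≤ d := by
    have := Finset.card_union_le σ A
    have hgle : g - (matRank Ind σ + m) + σ.card ≤ d := by
      rcases max_cases k (matRank Ind σ + m) with ⟨h1, h2⟩ | ⟨h1, h2⟩ <;> omega
    omega
  have hAT : Disjoint A T := by
    rw [Finset.disjoint_left]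
    intro x hxA hxT
    exact (Finset.mem_sdiff.mp hxA).2 (Finset.mem_union_right _ hxT)
  have hσT : Disjoint σ T := (hTτ.symm.mono_left hστ)
  have hσAT : Disjoint (σ ∪ A) T := by
    rw [Finset.disjoint_union_left]
    exact ⟨hσT, hAT⟩
  have hσAsub : σ ∪ A ⊆ Finset.univ \ T := by
    intro x hx
    rw [Finset.mem_sdiff]
    exact ⟨Finset.mem_univ x, Finset.disjoint_left.mp hσAT hx⟩
  have hcardVT : d ≤ (Finset.univ \ T).card := by
    rw [Finset.card_sdiff_of_subset (Finset.subset_univ T), Finset.card_univ]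
    omega
  obtain ⟨S, hσAS, hSsub, hSc⟩ := Finset.exists_subsuperset_card_eq hσAsub hσAc hcardVT
  refine ⟨S, T, ?_, hSc, hTc, (Finset.subset_union_left).trans hσAS, hTτ, ?_⟩
  · rw [Finset.disjoint_left]
    intro x hxS hxT
    exact (Finset.mem_sdiff.mp (hSsub hxS)).2 hxT
  · have hGsub : G ⊆ S ∪ T := by
      intro x hxG
      by_cases hx : x ∈ Bσ ∪ T
      · rcases Finset.mem_union.mp hx with h | h
        · exact Finset.mem_union_left _ (hσAS (Finset.mem_union_left _ (hBσσ h)))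
        · exact Finset.mem_union_right _ h
      · exact Finset.mem_union_left _ (hσAS (Finset.mem_union_right _
          (Finset.mem_sdiff.mpr ⟨hxG, hx⟩)))
    have := card_le_matRank hGI hGsub
    have hkg : k ≤ g := le_max_left _ _
    omega

/-- Construction for Part 1: if `k ≤ ρ(V \ τ₀)`, build a violating pair. -/
lemma constructC1 [Fintype V] (hM : IsMatroid Ind) {d m k : ℕ} {σ τ₀ : Finset V}
    (hστ : σ ⊆ τ₀) (hσd : σ.card ≤ d)
    (hcork : k + σ.card ≤ matRank Ind σ + d + m)
    (hmk : m ≤ k) (hVc : m + d ≤ Fintype.card V)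
    (hτr : k ≤ matRank Ind (Finset.univ \ τ₀)) :
    ∃ S T : Finset V, Disjoint S T ∧ S.card = d ∧ T.card = m ∧ σ ⊆ S ∧
      Disjoint T τ₀ ∧ k ≤ matRank Ind (S ∪ T) := by
  obtain ⟨Bσ, hBσσ, hBσI, hBσc⟩ := exists_basis hM σ
  set W := σ ∪ (Finset.univ \ τ₀) with hWdef
  set g := max k (matRank Ind σ) with hgdef
  have hgW : g ≤ matRank Ind W := by
    rcases max_cases k (matRank Ind σ) with ⟨h1, h2⟩ | ⟨h1, h2⟩
    · rw [hgdef, h1]; exact hτr.trans (matRank_mono Finset.subset_union_right)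
    · rw [hgdef, h1]; exact matRank_mono Finset.subset_union_left
  obtain ⟨I, hBσsubI, hIW, hII, hIc⟩ :=
    exists_extend (n := g) hM hBσI (hBσσ.trans Finset.subset_union_left)
      (by rw [hBσc]; exact le_max_right _ _) hgW
  have hIσ : I ∩ σ = Bσ := by
    apply Finset.Subset.antisymm
    · exact mem_of_indep_inter hM hII hBσsubI hBσσ (le_of_eq hBσc.symm)
    · intro x hx
      exact Finset.mem_inter.mpr ⟨hBσsubI hx, hBσσ hx⟩
  have hIsc : (I \ σ).card + matRank Ind σ = g := by
    have := Finset.card_sdiff_add_card_inter I σ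
    rw [hIσ, hBσc] at this
    omega
  have hIsτ : I \ σ ⊆ Finset.univ \ τ₀ := by
    intro x hx
    rcases Finset.mem_sdiff.mp hx with ⟨hxI, hxσ⟩
    rcases Finset.mem_union.mp (hIW hxI) with h | h
    · exact absurd h hxσ
    · exact h
  set t := min m ((I \ σ).card) with htdef
  obtain ⟨Tpart, hTpsub, hTpc⟩ := Finset.exists_subset_card_eq (min_le_right m ((I \ σ).card))
  set Spart := (I \ σ) \ Tpart with hSpdef
  have hSpc : Spart.card = (I \ σ).card - t := by
    rw [hSpdef, Finset.card_sdiff_of_subset hTpsub, hTpc]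
  have hkg : k ≤ g := le_max_left _ _
  have hρσd : matRank Ind σ ≤ σ.card := (matRank_le_card σ).trans (le_refl _)
  have hcuτ : k ≤ (Finset.univ \ τ₀).card := hτr.trans (matRank_le_card _)
  have hsub2 : (Finset.univ \ τ₀) \ (I \ σ) ⊆ (Finset.univ \ τ₀) \ I := by
    intro x hx
    rcases Finset.mem_sdiff.mp hx with ⟨hx1, hx2⟩
    refine Finset.mem_sdiff.mpr ⟨hx1, fun hxI => hx2 ?_⟩
    refine Finset.mem_sdiff.mpr ⟨hxI, fun hxσ => ?_⟩
    exact (Finset.mem_sdiff.mp hx1).2 (hστ hxσ)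
  have havail : m - t ≤ ((Finset.univ \ τ₀) \ I).card := by
    have h1 : ((Finset.univ \ τ₀) \ (I \ σ)).card
        = (Finset.univ \ τ₀).card - (I \ σ).card := Finset.card_sdiff_of_subset hIsτ
    have h2 := Finset.card_le_card hsub2
    have h3 : g ≤ k ∨ g ≤ matRank Ind σ + m := by
      rcases max_cases k (matRank Ind σ) with ⟨e1, e2⟩ | ⟨e1, e2⟩ <;> omega
    rcases min_cases m ((I \ σ).card) with ⟨e1, e2⟩ | ⟨e1, e2⟩ <;> omega
  obtain ⟨P, hPsub, hPc⟩ := Finset.exists_subset_card_eq havail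
  have hPdisjI : Disjoint P I := by
    rw [Finset.disjoint_left]
    intro x hxP hxI
    exact (Finset.mem_sdiff.mp (hPsub hxP)).2 hxI
  set T := Tpart ∪ P with hTdef
  have hTc : T.card = m := by
    rw [hTdef, Finset.card_union_of_disjoint, hTpc, hPc]
    · omega
    · exact (hPdisjI.mono_right (hTpsub.trans Finset.sdiff_subset)).symm
  have hTuτ : T ⊆ Finset.univ \ τ₀ := by
    rw [hTdef]
    exact Finset.union_subset (hTpsub.trans hIsτ) (hPsub.trans Finset.sdiff_subset)
  have hTτ : Disjoint T τ₀ := by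
    rw [Finset.disjoint_left]
    intro x hxT hxτ
    exact (Finset.mem_sdiff.mp (hTuτ hxT)).2 hxτ
  have hσSpc : (σ ∪ Spart).card ≤ d := by
    have := Finset.card_union_le σ Spart
    have h3 : g ≤ k ∨ g = matRank Ind σ := by
      rcases max_cases k (matRank Ind σ) with ⟨e1, e2⟩ | ⟨e1, e2⟩ <;> omega
    rcases min_cases m ((I \ σ).card) with ⟨e1, e2⟩ | ⟨e1, e2⟩ <;> omega
  have hσSpT : Disjoint (σ ∪ Spart) T := by
    rw [Finset.disjoint_left]
    intro x hx hxT
    rcases Finset.mem_union.mp hx with h | h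
    · exact (Finset.mem_sdiff.mp (hTuτ hxT)).2 (hστ h)
    · rcases Finset.mem_union.mp hxT with h2 | h2
      · exact (Finset.mem_sdiff.mp h).2 h2
      · exact Finset.disjoint_left.mp hPdisjI h2 (Finset.sdiff_subset (Finset.sdiff_subset h))
  have hσSpsub : σ ∪ Spart ⊆ Finset.univ \ T := by
    intro x hx
    exact Finset.mem_sdiff.mpr ⟨Finset.mem_univ x, Finset.disjoint_left.mp hσSpT hx⟩
  have hcardVT : d ≤ (Finset.univ \ T).card := by
    rw [Finset.card_sdiff_of_subset (Finset.subset_univ T), Finset.card_univ, hTc]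
    omega
  obtain ⟨S, hσSpS, hSsub, hSc⟩ := Finset.exists_subsuperset_card_eq hσSpsub hσSpc hcardVT
  refine ⟨S, T, ?_, hSc, hTc, (Finset.subset_union_left).trans hσSpS, hTτ, ?_⟩
  · rw [Finset.disjoint_left]
    intro x hxS hxT
    exact (Finset.mem_sdiff.mp (hSsub hxS)).2 hxT
  · have hIsub : I ⊆ S ∪ T := by
      intro x hxI
      by_cases hxσ : x ∈ σ
      · exact Finset.mem_union_left _ (hσSpS (Finset.mem_union_left _ hxσ))
      · have hxIs : x ∈ I \ σ := Finset.mem_sdiff.mpr ⟨hxI, hxσ⟩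
        by_cases hxT : x ∈ Tpart
        · exact Finset.mem_union_right _ (Finset.mem_union_left _ hxT)
        · exact Finset.mem_union_left _ (hσSpS (Finset.mem_union_right _
            (Finset.mem_sdiff.mpr ⟨hxIs, hxT⟩)))
    have := card_le_matRank hII hIsub
    omega

lemma exists_maximal_face [Fintype V] {K : Finset V → Prop} {η : Finset V} (hη : K η) :
    ∃ ζ, IsMaximalFace K ζ ∧ η ⊆ ζ := by
  classical
  obtain ⟨ζ, hζ, hmax⟩ := Finset.exists_max_image
    (Finset.univ.filter fun ζ => K ζ ∧ η ⊆ ζ) Finset.card ⟨η, by simp [hη]⟩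
  simp only [Finset.mem_filter, Finset.mem_univ, true_and] at hζ
  refine ⟨ζ, ⟨hζ.1, ?_⟩, hζ.2⟩
  intro η' hη' hsub
  have hη'' : η' ∈ Finset.univ.filter fun ζ => K ζ ∧ η ⊆ ζ := by
    simp only [Finset.mem_filter, Finset.mem_univ, true_and]
    exact ⟨hη', hζ.2.trans hsub⟩
  exact (Finset.eq_of_subset_of_card_le hsub (hmax η' hη'')).symm

lemma face_subset_of_free [Fintype V] {K : Finset V → Prop} {σ τ₀ : Finset V}
    (hτ₀ : IsMaximalFace K τ₀ ∧ σ ⊆ τ₀)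
    (huniq : ∀ ζ, (IsMaximalFace K ζ ∧ σ ⊆ ζ) → ζ = τ₀)
    {η : Finset V} (hη : K η) (hση : σ ⊆ η) : η ⊆ τ₀ := by
  obtain ⟨ζ, hζmax, hηζ⟩ := exists_maximal_face hη
  have := huniq ζ ⟨hζmax, hση.trans hηζ⟩
  exact this ▸ hηζ


lemma exists_base_pair [Fintype V] (hM : IsMatroid Ind) {d r m k : ℕ}
    (hrank : matRank Ind Finset.univ = r) (hkr : k ≤ r) (hkdm : k ≤ m + d)
    (hVc : m + d ≤ Fintype.card V) :
    ∃ S T : Finset V, Disjoint S T ∧ S.card = d ∧ T.card = m ∧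
      k ≤ matRank Ind (S ∪ T) := by
  obtain ⟨B, _, hBI, hBc⟩ := exists_basis hM Finset.univ
  obtain ⟨I, hIB, hIc⟩ := Finset.exists_subset_card_eq (s := B) (n := k) (by omega)
  have hII : Ind I := hM.subset hBI hIB
  have hcu : m + d ≤ Finset.univ.card (α := V) := by
    rw [Finset.card_univ]; exact hVc
  obtain ⟨U, hIU, _, hUc⟩ := Finset.exists_subsuperset_card_eq (Finset.subset_univ I)
    (by omega) hcu
  obtain ⟨T, hTU, hTc⟩ := Finset.exists_subset_card_eq (s := U) (n := m) (by omega)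
  refine ⟨U \ T, T, Finset.sdiff_disjoint, ?_, hTc, ?_⟩
  · rw [Finset.card_sdiff_of_subset hTU]; omega
  · rw [Finset.sdiff_union_of_subset hTU]
    have := card_le_matRank hII hIU
    omega

end Aux

/-- Colorful Helly for `d`-collapsible complexes and matroids
(Theorem: very colorful Helly, `d`-collapsible version). -/
theorem stmt_9 {V : Type*} [DecidableEq V] [Fintype V]
    (d r m k : ℕ) (hd : 1 ≤ d) (hr : d + 1 ≤ r) (hm1 : 1 ≤ m) (hmr : m ≤ r)
    (hmk : m ≤ k) (hk : k ≤ min (m + d) r)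
    (hV : max (m + d) r ≤ Fintype.card V)
    (K : Finset V → Prop)
    (hcomplex : ∀ ⦃σ τ : Finset V⦄, K τ → σ ⊆ τ → K σ)
    (hcoll : DCollapsible d K)
    (Ind : Finset V → Prop) [DecidablePred Ind] (hM : IsMatroid Ind)
    (hrank : matRank Ind Finset.univ = r)
    (hyp : ∀ S T : Finset V, Disjoint S T → S.card = d → T.card = m →
      k ≤ matRank Ind (S ∪ T) → ∃ v ∈ T, K (insert v S)) :
    ∃ τ : Finset V, K τ ∧ r + 1 - m ≤ matRank Ind τ ∧
      matRank Ind (Finset.univ \ τ) ≤ k - 1 := by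
  classical
  have hk1 : k ≤ m + d := hk.trans (min_le_left _ _)
  have hk2 : k ≤ r := hk.trans (min_le_right _ _)
  have hVc : m + d ≤ Fintype.card V := (le_max_left _ _).trans hV
  clear hcomplex hk hV hd hr
  unfold DCollapsible at hcoll
  induction hcoll using Relation.ReflTransGen.head_induction_on with
  | refl =>
    obtain ⟨S, T, h1, h2, h3, h4⟩ := exists_base_pair hM hrank hk2 hk1 hVc
    obtain ⟨v, _, hfalse⟩ := hyp S T h1 h2 h3 h4
    exact hfalse.elim
  | @head Y Y' h' hchain ih =>
    obtain ⟨σ, ⟨hKσ, hex⟩, hσd, hiff⟩ := h'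
    obtain ⟨τ₀, ⟨hτmax, hστ⟩, huniq⟩ := hex
    by_cases hgood : ∀ S T : Finset V, Disjoint S T → S.card = d → T.card = m →
        k ≤ matRank Ind (S ∪ T) → ∃ v ∈ T, Y' (insert v S)
    · obtain ⟨τ, hτ, h1, h2⟩ := ih hgood
      exact ⟨τ, ((hiff τ).mp hτ).1, h1, h2⟩
    · push_neg at hgood
      obtain ⟨S, T, hST, hSc, hTc, hrk, hbad⟩ := hgood
      obtain ⟨v₀, hv₀T, hv₀K⟩ := hyp S T hST hSc hTc hrk
      have hσsub : σ ⊆ insert v₀ S := by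
        by_contra hcon
        exact hbad v₀ hv₀T ((hiff _).mpr ⟨hv₀K, hcon⟩)
      have hσST : σ ⊆ S ∪ T := hσsub.trans (Finset.insert_subset
        (Finset.mem_union_right _ hv₀T) Finset.subset_union_left)
      have hcork : k + σ.card ≤ matRank Ind σ + d + m := by
        have h6 := matRank_le_add hM hσST
        have h7 : ((S ∪ T) \ σ).card = (S ∪ T).card - σ.card := Finset.card_sdiff_of_subset hσST
        have h8 : (S ∪ T).card = d + m := by
          rw [Finset.card_union_of_disjoint hST]; omega
        have h9 : σ.card ≤ (S ∪ T).card := Finset.card_le_card hσST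
        omega
      have hfacesub : ∀ η, Y η → σ ⊆ η → η ⊆ τ₀ := fun η hη hση =>
        face_subset_of_free ⟨hτmax, hστ⟩ (fun ζ hζ => huniq ζ hζ) hη hση
      have key : ∀ S' T' : Finset V, Disjoint S' T' → S'.card = d → T'.card = m →
          σ ⊆ S' → Disjoint T' τ₀ → k ≤ matRank Ind (S' ∪ T') → False := by
        intro S' T' d1 d2 d3 d4 d5 d6
        obtain ⟨v, hvT, hvK⟩ := hyp S' T' d1 d2 d3 d6
        have hsub : insert v S' ⊆ τ₀ :=
          hfacesub _ hvK (d4.trans (Finset.subset_insert _ _))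
        exact Finset.disjoint_left.mp d5 hvT (hsub (Finset.mem_insert_self v S'))
      refine ⟨τ₀, hτmax.1, ?_, ?_⟩
      · by_contra hcon
        push_neg at hcon
        have hτr : matRank Ind τ₀ + m ≤ r := by omega
        obtain ⟨S', T', d1, d2, d3, d4, d5, d6⟩ :=
          constructC2 hM hrank hστ hσd hcork hk2 hVc hτr
        exact key S' T' d1 d2 d3 d4 d5 d6
      · by_contra hcon
        push_neg at hcon
        have hτr : k ≤ matRank Ind (Finset.univ \ τ₀) := by omega
        obtain ⟨S', T', d1, d2, d3, d4, d5, d6⟩ :=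
          constructC1 hM hστ hσd hcork hmk hVc hτr
        exact key S' T' d1 d2 d3 d4 d5 d6
end

section
/- Let P₁,…,P_r be finite sets of points in ℝ^d, and let v₁,…,v_r ∈ ℝ^{r−1} be the vertices of the standard (r−1)-dimensional simplex (so that v₁ + ⋯ + v_r = 0 after translating the barycenter to the origin). Define P̄ = { (x,1) ⊗ v_j : j ∈ [r], x ∈ P_j } ⊆ ℝ^{(r−1)(d+1)}, where ⊗ denotes the Kronecker (tensor) product of the column vector (x,1) ∈ ℝ^{d+1} with v_j. Then ⋂_{j=1}^r conv(P_j) = ∅ if and only if 0 ∉ conv(P̄). -/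
open Finset

/-- If `v` is affinely independent and sums to zero, then any linear dependence
`∑ c k • v k = 0` has constant coefficients. -/
lemma sarkaria_const_coeff {r : ℕ} {v : Fin r → (Fin (r - 1) → ℝ)}
    (hvAff : AffineIndependent ℝ v) (hvSum : ∑ j, v j = 0)
    (c : Fin r → ℝ) (hc : ∑ k, c k • v k = 0) (k k' : Fin r) :
    c k = c k' := by
  have hr0 : 0 < r := k.pos
  have hrR : (0 : ℝ) < r := by exact_mod_cast hr0
  set m : ℝ := (∑ i, c i) / r with hm
  have h1 : ∑ i, (c i - m) = 0 := by
    rw [Finset.sum_sub_distrib, Finset.sum_const, card_univ, Fintype.card_fin]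
    rw [hm, nsmul_eq_mul]
    field_simp
    ring
  have h2 : ∑ i, (c i - m) • v i = 0 := by
    have : ∑ i, (c i - m) • v i = (∑ i, c i • v i) - m • ∑ i, v i := by
      rw [Finset.smul_sum, ← Finset.sum_sub_distrib]
      exact Finset.sum_congr rfl fun i _ => by rw [sub_smul]
    rw [this, hc, hvSum, smul_zero, sub_zero]
  have hzero := affineIndependent_iff.mp hvAff Finset.univ (fun i => c i - m) h1 h2
  have hk : c k - m = 0 := by simpa using hzero k (mem_univ k)
  have hk' : c k' - m = 0 := by simpa using hzero k' (mem_univ k')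
  linarith

/-- (Sarkaria's lemma) With `v₁,…,v_r` the vertices of a standard `(r-1)`-simplex
centered at the origin (i.e. affinely independent points summing to `0`), and
`P̄ = {(x,1) ⊗ v_j : j ∈ [r], x ∈ P_j}` (Kronecker products), one has
`⋂ⱼ conv(P_j) = ∅ ↔ 0 ∉ conv(P̄)`. -/
theorem stmt_13 (d r : ℕ) (hr : 1 ≤ r)
    (P : Fin r → Finset (Fin d → ℝ))
    (v : Fin r → (Fin (r - 1) → ℝ))
    (hvAff : AffineIndependent ℝ v) (hvSum : ∑ j, v j = 0) :
    (⋂ j : Fin r, convexHull ℝ (↑(P j) : Set (Fin d → ℝ))) = ∅ ↔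
      (0 : Fin (d + 1) × Fin (r - 1) → ℝ) ∉
        convexHull ℝ {z : Fin (d + 1) × Fin (r - 1) → ℝ |
          ∃ (j : Fin r) (x : Fin d → ℝ), x ∈ P j ∧
            z = fun ab => (Fin.snoc x (1 : ℝ) : Fin (d + 1) → ℝ) ab.1 * v j ab.2} := by
  classical
  have hrR : (0 : ℝ) < r := by exact_mod_cast hr
  set F : Fin r → (Fin d → ℝ) → (Fin (d + 1) × Fin (r - 1) → ℝ) :=
    fun j x => fun ab => (Fin.snoc x (1 : ℝ) : Fin (d + 1) → ℝ) ab.1 * v j ab.2 with hF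
  have hvSumb : ∀ b, ∑ j, v j b = 0 := by
    intro b
    have := congrFun hvSum b
    simpa [Finset.sum_apply] using this
  constructor
  · -- hard direction: intersection empty → 0 not in hull
    intro hEmpty h0
    rw [_root_.convexHull_eq] at h0
    obtain ⟨ι, t, w, z, hw0, hw1, hzmem, hcm⟩ := h0
    rw [Finset.centerMass_eq_of_sum_1 _ _ hw1] at hcm
    -- choose the data
    have hch : ∀ i : {i // i ∈ t}, ∃ j : Fin r, ∃ x : Fin d → ℝ,
        x ∈ P j ∧ z i.1 = F j x := fun i => hzmem i.1 i.2
    choose j x hxP hzeq using hch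
    have hsum0 : ∑ i ∈ t.attach, w i.1 • F (j i) (x i) = 0 := by
      calc ∑ i ∈ t.attach, w i.1 • F (j i) (x i)
          = ∑ i ∈ t.attach, w i.1 • z i.1 :=
            Finset.sum_congr rfl fun i _ => by rw [hzeq]
        _ = ∑ i ∈ t, w i • z i := Finset.sum_attach t (fun i => w i • z i)
        _ = 0 := hcm
    -- define grouped coefficients
    set c : Fin (d + 1) → Fin r → ℝ := fun a k =>
      ∑ i ∈ t.attach.filter (fun i => j i = k), w i.1 * (Fin.snoc (x i) (1 : ℝ) : Fin (d + 1) → ℝ) a with hcdef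
    have hcv : ∀ a : Fin (d + 1), ∑ k, c a k • v k = 0 := by
      intro a
      funext b
      have h0b : ∑ i ∈ t.attach, w i.1 * ((Fin.snoc (x i) (1 : ℝ) : Fin (d + 1) → ℝ) a * v (j i) b) = 0 := by
        have := congrFun hsum0 (a, b)
        simpa [Finset.sum_apply, hF] using this
      have : (∑ k, c a k • v k) b = ∑ k, c a k * v k b := by
        simp [Finset.sum_apply]
      rw [this]
      have hstep : ∀ k : Fin r, c a k * v k b =
          ∑ i ∈ t.attach.filter (fun i => j i = k),
            w i.1 * ((Fin.snoc (x i) (1 : ℝ) : Fin (d + 1) → ℝ) a * v (j i) b) := by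
        intro k
        rw [hcdef, Finset.sum_mul]
        refine Finset.sum_congr rfl fun i hi => ?_
        have hji : j i = k := (Finset.mem_filter.mp hi).2
        rw [hji]; ring
      calc ∑ k, c a k * v k b
          = ∑ k, ∑ i ∈ t.attach.filter (fun i => j i = k),
              w i.1 * ((Fin.snoc (x i) (1 : ℝ) : Fin (d + 1) → ℝ) a * v (j i) b) :=
            Finset.sum_congr rfl fun k _ => hstep k
        _ = ∑ i ∈ t.attach, w i.1 * ((Fin.snoc (x i) (1 : ℝ) : Fin (d + 1) → ℝ) a * v (j i) b) :=
            Finset.sum_fiberwise _ _ _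
        _ = 0 := h0b
    have hcconst : ∀ a k k', c a k = c a k' := fun a =>
      sarkaria_const_coeff hvAff hvSum (c a) (hcv a)
    set k₀ : Fin r := ⟨0, hr⟩ with hk₀
    -- the "mass" of each group
    have hclast : ∀ k, c (Fin.last d) k =
        ∑ i ∈ t.attach.filter (fun i => j i = k), w i.1 := by
      intro k
      rw [hcdef]
      exact Finset.sum_congr rfl fun i _ => by simp [Fin.snoc_last]
    have hmass_sum : ∑ k, c (Fin.last d) k = 1 := by
      calc ∑ k, c (Fin.last d) k
          = ∑ k, ∑ i ∈ t.attach.filter (fun i => j i = k), w i.1 :=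
            Finset.sum_congr rfl fun k _ => hclast k
        _ = ∑ i ∈ t.attach, w i.1 := Finset.sum_fiberwise _ _ _
        _ = ∑ i ∈ t, w i := Finset.sum_attach t w
        _ = 1 := hw1
    have hmass : ∀ k, c (Fin.last d) k = 1 / r := by
      intro k
      have hsum' : ∑ k', c (Fin.last d) k' = (r : ℝ) * c (Fin.last d) k := by
        calc ∑ k', c (Fin.last d) k'
            = ∑ _k' : Fin r, c (Fin.last d) k :=
              Finset.sum_congr rfl fun k' _ => hcconst _ k' k
          _ = (r : ℝ) * c (Fin.last d) k := by
              simp [Finset.sum_const, card_univ, mul_comm]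
      have := hmass_sum
      rw [hsum'] at this
      field_simp
      linarith
    -- define the common point
    set p : Fin d → ℝ := fun a => (r : ℝ) * c (Fin.castSucc a) k₀ with hp
    have hpmem : ∀ k : Fin r, p ∈ convexHull ℝ (↑(P k) : Set (Fin d → ℝ)) := by
      intro k
      set tk := t.attach.filter (fun i => j i = k) with htk
      have hWsum : ∑ i ∈ tk, (r : ℝ) * w i.1 = 1 := by
        rw [← Finset.mul_sum, ← hclast k, hmass k]
        field_simp
      have hmem := Finset.centerMass_mem_convexHull tk
        (w := fun i => (r : ℝ) * w i.1) (z := fun i => x i)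
        (fun i hi => mul_nonneg (le_of_lt hrR) (hw0 i.1 i.2))
        (by rw [hWsum]; exact one_pos)
        (fun i hi => by
          have hji : j i = k := (Finset.mem_filter.mp hi).2
          exact Finset.mem_coe.mpr (hji ▸ hxP i))
      have hcmk : tk.centerMass (fun i => (r : ℝ) * w i.1) (fun i => x i) = p := by
        rw [Finset.centerMass_eq_of_sum_1 _ _ hWsum]
        funext a
        have hca : ∑ i ∈ tk, w i.1 * x i a = c (Fin.castSucc a) k := by
          rw [hcdef]
          exact Finset.sum_congr rfl fun i _ => by simp [Fin.snoc_castSucc]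
        calc (∑ i ∈ tk, ((r : ℝ) * w i.1) • x i) a
            = ∑ i ∈ tk, (r : ℝ) * (w i.1 * x i a) := by
              simp [Finset.sum_apply, mul_assoc]
          _ = (r : ℝ) * ∑ i ∈ tk, w i.1 * x i a := by rw [Finset.mul_sum]
          _ = (r : ℝ) * c (Fin.castSucc a) k := by rw [hca]
          _ = (r : ℝ) * c (Fin.castSucc a) k₀ := by rw [hcconst (Fin.castSucc a) k k₀]
          _ = p a := rfl
      rwa [hcmk] at hmem
    have : p ∈ ⋂ j : Fin r, convexHull ℝ (↑(P j) : Set (Fin d → ℝ)) :=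
      Set.mem_iInter.mpr hpmem
    rw [hEmpty] at this
    exact this
  · -- easy direction: 0 not in hull → intersection empty
    intro h0
    rw [Set.eq_empty_iff_forall_notMem]
    intro p hp
    apply h0
    have hpj : ∀ jj : Fin r, p ∈ convexHull ℝ (↑(P jj) : Set (Fin d → ℝ)) :=
      fun jj => Set.mem_iInter.mp hp jj
    have hch : ∀ jj : Fin r, ∃ μ : (Fin d → ℝ) → ℝ,
        (∀ y ∈ P jj, 0 ≤ μ y) ∧ ∑ y ∈ P jj, μ y = 1 ∧ ∑ y ∈ P jj, μ y • y = p :=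
      fun jj => Finset.mem_convexHull'.mp (hpj jj)
    choose μ hμ0 hμ1 hμc using hch
    -- the big index set
    set T : Finset ((_ : Fin r) × (Fin d → ℝ)) := Finset.univ.sigma (fun jj => P jj) with hT
    set W : ((_ : Fin r) × (Fin d → ℝ)) → ℝ := fun q => μ q.1 q.2 / r with hW
    have hW0 : ∀ q ∈ T, 0 ≤ W q := by
      intro q hq
      have := (Finset.mem_sigma.mp hq).2
      exact div_nonneg (hμ0 q.1 q.2 this) (le_of_lt hrR)
    have hWsum : ∑ q ∈ T, W q = 1 := by
      rw [hT, Finset.sum_sigma]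
      have : ∀ jj : Fin r, ∑ y ∈ P jj, W ⟨jj, y⟩ = 1 / r := by
        intro jj
        rw [hW]
        simp only
        rw [← Finset.sum_div, hμ1 jj]
      rw [Finset.sum_congr rfl fun jj _ => this jj]
      rw [Finset.sum_const, card_univ, Fintype.card_fin, nsmul_eq_mul]
      field_simp
    -- show the combination is 0
    have hinner : ∀ (jj : Fin r) (a : Fin (d + 1)),
        ∑ y ∈ P jj, μ jj y * (Fin.snoc y (1 : ℝ) : Fin (d + 1) → ℝ) a = (Fin.snoc p (1 : ℝ) : Fin (d + 1) → ℝ) a := by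
      intro jj a
      refine Fin.lastCases ?_ (fun a0 => ?_) a
      · simp only [Fin.snoc_last, mul_one]
        exact hμ1 jj
      · simp only [Fin.snoc_castSucc]
        have := congrFun (hμc jj) a0
        simpa [Finset.sum_apply] using this
    have hzero : ∑ q ∈ T, W q • F q.1 q.2 = 0 := by
      funext ab
      obtain ⟨a, b⟩ := ab
      have : (∑ q ∈ T, W q • F q.1 q.2) (a, b)
          = ∑ q ∈ T, W q * ((Fin.snoc q.2 (1 : ℝ) : Fin (d + 1) → ℝ) a * v q.1 b) := by
        simp [Finset.sum_apply, hF]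
      rw [this]
      rw [hT, Finset.sum_sigma]
      have hstep : ∀ jj : Fin r, ∑ y ∈ P jj, W ⟨jj, y⟩ * ((Fin.snoc y (1 : ℝ) : Fin (d + 1) → ℝ) a * v jj b)
          = (1 / r) * (Fin.snoc p (1 : ℝ) : Fin (d + 1) → ℝ) a * v jj b := by
        intro jj
        calc ∑ y ∈ P jj, W ⟨jj, y⟩ * ((Fin.snoc y (1 : ℝ) : Fin (d + 1) → ℝ) a * v jj b)
            = (1 / r) * (∑ y ∈ P jj, μ jj y * (Fin.snoc y (1 : ℝ) : Fin (d + 1) → ℝ) a) * v jj b := by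
              rw [Finset.mul_sum, Finset.sum_mul]
              refine Finset.sum_congr rfl fun y _ => ?_
              simp only [hW]
              ring
          _ = (1 / r) * (Fin.snoc p (1 : ℝ) : Fin (d + 1) → ℝ) a * v jj b := by rw [hinner jj a]
      rw [Finset.sum_congr rfl fun jj _ => hstep jj]
      rw [← Finset.mul_sum, hvSumb b, mul_zero]
      rfl
    rw [show (0 : Fin (d + 1) × Fin (r - 1) → ℝ) = ∑ q ∈ T, W q • F q.1 q.2 from hzero.symm]
    exact (convex_convexHull ℝ _).sum_mem hW0 hWsum
      (fun q hq => subset_convexHull ℝ _ ⟨q.1, q.2, (Finset.mem_sigma.mp hq).2, rfl⟩)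
end

section
/- Let d ≥ 1, r ≥ d+1, 1 ≤ m ≤ r, and m ≤ k ≤ min{m+d, r}. Let 𝒞 be a finite family of convex sets in ℝ^d colored with r colors (a partition into r nonempty color classes), with |𝒞| ≥ max{m+d, r}. Assume that for every subfamily {A₁,…,A_d, B₁,…,B_m} ⊆ 𝒞 of d+m sets colored with at least k different colors, at least one of the subfamilies {A₁,…,A_d, B_i} (i ∈ [m]) has nonempty intersection. Then there exist r − k + 1 color classes whose union has nonempty common intersection. -/
open Finset

noncomputable def ssq (d : ℕ) : (Fin d → ℝ) → ℝ := fun x => ∑ j, x j ^ 2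

lemma ssq_continuous (d : ℕ) : Continuous (ssq d) := by
  unfold ssq
  exact continuous_finset_sum _ fun j _ => (continuous_apply j).pow 2

lemma ssq_nonneg (d : ℕ) (x : Fin d → ℝ) : 0 ≤ ssq d x :=
  Finset.sum_nonneg fun j _ => sq_nonneg _

lemma ssq_convex_ineq {d : ℕ} {x y : Fin d → ℝ} {a b : ℝ} (ha : 0 ≤ a) (hb : 0 ≤ b)
    (hab : a + b = 1) : ssq d (a • x + b • y) ≤ a * ssq d x + b * ssq d y := by
  have hpt : ∀ u v : ℝ, (a * u + b * v) ^ 2 ≤ a * u ^ 2 + b * v ^ 2 := by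
    intro u v
    have := (Even.convexOn_pow (n := 2) (even_two)).2 (Set.mem_univ u) (Set.mem_univ v) ha hb hab
    simpa [smul_eq_mul] using this
  unfold ssq
  rw [Finset.mul_sum, Finset.mul_sum, ← Finset.sum_add_distrib]
  refine Finset.sum_le_sum fun j _ => ?_
  simpa using hpt (x j) (y j)

lemma ssq_convex_lt {d : ℕ} (α : ℝ) : Convex ℝ {y : Fin d → ℝ | ssq d y < α} := by
  intro x hx y hy a b ha hb hab
  have := ssq_convex_ineq (x := x) (y := y) ha hb hab
  have hx' : ssq d x < α := hx
  have hy' : ssq d y < α := hy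
  calc ssq d (a • x + b • y) ≤ a * ssq d x + b * ssq d y := this
    _ < a * α + b * α := by
        rcases eq_or_lt_of_le ha with h | h
        · rcases eq_or_lt_of_le hb with h' | h'
          · exfalso; rw [← h, ← h'] at hab; norm_num at hab
          · have : a = 0 := h.symm
            simp only [this, zero_mul, zero_add]
            exact mul_lt_mul_of_pos_left hy' h'
        · rcases eq_or_lt_of_le hb with h' | h'
          · have : b = 0 := h'.symm
            simp only [this, zero_mul, add_zero]
            exact mul_lt_mul_of_pos_left hx' h
          · exact add_lt_add (mul_lt_mul_of_pos_left hx' h) (mul_lt_mul_of_pos_left hy' h')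
    _ = α := by rw [← add_mul, hab, one_mul]

lemma ssq_min_unique {d : ℕ} {K : Set (Fin d → ℝ)} (hK : Convex ℝ K) {x y : Fin d → ℝ}
    (hx : x ∈ K) (hy : y ∈ K) (hminx : IsMinOn (ssq d) K x) (hminy : IsMinOn (ssq d) K y) :
    x = y := by
  have hmid : (1/2 : ℝ) • x + (1/2 : ℝ) • y ∈ K := hK hx hy (by norm_num) (by norm_num) (by norm_num)
  have h1 : ssq d x ≤ ssq d ((1/2 : ℝ) • x + (1/2 : ℝ) • y) := hminx hmid
  have h2 : ssq d y ≤ ssq d x := hminy hx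
  have h3 : ssq d x ≤ ssq d y := hminx hy
  have heq : ssq d x = ssq d y := le_antisymm h3 h2
  -- identity: ssq((x+y)/2) = (ssq x + ssq y)/2 - ssq((x-y)/2)
  have hid : ssq d ((1/2 : ℝ) • x + (1/2 : ℝ) • y)
      = (ssq d x + ssq d y) / 2 - ssq d ((1/2 : ℝ) • (x - y)) := by
    unfold ssq
    rw [eq_sub_iff_add_eq, ← Finset.sum_add_distrib, ← Finset.sum_add_distrib, Finset.sum_div]
    refine Finset.sum_congr rfl fun j _ => ?_
    simp only [Pi.add_apply, Pi.smul_apply, Pi.sub_apply, smul_eq_mul]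
    ring
  have h4 : ssq d ((1/2 : ℝ) • (x - y)) ≤ 0 := by
    rw [hid, heq] at h1
    linarith
  have h5 : ssq d ((1/2 : ℝ) • (x - y)) = 0 := le_antisymm h4 (ssq_nonneg _ _)
  have h6 : ∀ j, ((1/2 : ℝ) • (x - y)) j = 0 := by
    intro j
    have := (Finset.sum_eq_zero_iff_of_nonneg (fun j _ => sq_nonneg (((1/2 : ℝ) • (x - y)) j))).mp h5 j (Finset.mem_univ j)
    exact pow_eq_zero_iff (by norm_num) |>.mp this
  funext j
  have := h6 j
  simp only [Pi.smul_apply, Pi.sub_apply, smul_eq_mul] at this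
  have : x j - y j = 0 := by linarith
  linarith


lemma biInter_convex {ι : Type*} {d : ℕ} (C' : ι → Set (Fin d → ℝ))
    (h : ∀ i, Convex ℝ (C' i)) (X : Finset ι) : Convex ℝ (⋂ j ∈ X, C' j) :=
  convex_iInter fun i => convex_iInter fun _ => h i

lemma biInter_compact {ι : Type*} {d : ℕ} (C' : ι → Set (Fin d → ℝ))
    (h : ∀ i, IsCompact (C' i)) (X : Finset ι) (hX : X.Nonempty) :
    IsCompact (⋂ j ∈ X, C' j) := by
  obtain ⟨j₀, hj₀⟩ := hX
  exact IsCompact.of_isClosed_subset (h j₀)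
    (isClosed_biInter fun i _ => (h i).isClosed)
    (Set.biInter_subset_of_mem hj₀)

lemma basisLemma {ι : Type*} [DecidableEq ι] {d : ℕ} (hd : 1 ≤ d)
    (C' : ι → Set (Fin d → ℝ))
    (hconv : ∀ i, Convex ℝ (C' i)) (hcomp : ∀ i, IsCompact (C' i))
    (X : Finset ι) (hXcard : X.card = d + 1) (hne : (⋂ j ∈ X, C' j).Nonempty) :
    ∃ Y ⊆ X, Y.card = d ∧ ∃ q ∈ ⋂ j ∈ X, C' j, IsMinOn (ssq d) (⋂ j ∈ Y, C' j) q := by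
  classical
  by_contra hcon
  push_neg at hcon
  -- minimizer on K X
  have hXne : X.Nonempty := Finset.card_pos.mp (by omega)
  obtain ⟨qX, hqXmem, hqXmin⟩ := (biInter_compact C' hcomp X hXne).exists_isMinOn hne
    (ssq_continuous d).continuousOn
  set α := ssq d qX with hα
  -- for every d-subset Y of X, the min of ssq on K Y is < α
  have hY : ∀ Y ⊆ X, Y.card = d → ∃ qY ∈ ⋂ j ∈ Y, C' j, ssq d qY < α := by
    intro Y hYX hYcard
    have hYne : Y.Nonempty := Finset.card_pos.mp (by omega)
    have hKXY : (⋂ j ∈ X, C' j) ⊆ ⋂ j ∈ Y, C' j :=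
      Set.biInter_mono hYX fun _ _ => Set.Subset.rfl
    obtain ⟨qY, hqYmem, hqYmin⟩ := (biInter_compact C' hcomp Y hYne).exists_isMinOn
      (hne.mono hKXY) (ssq_continuous d).continuousOn
    refine ⟨qY, hqYmem, ?_⟩
    by_contra hle
    push_neg at hle
    -- then qX is a minimizer on K Y lying in K X, contradicting hcon
    exact hcon Y hYX hYcard qX hqXmem
      (fun z hz => le_trans hle (hqYmin hz))
  -- Helly family
  set F : Option ι → Set (Fin d → ℝ) :=
    fun o => match o with
      | none => {y | ssq d y < α}
      | some j => C' j with hF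
  set s : Finset (Option ι) := insert none (X.image some) with hs
  have hrank : Module.finrank ℝ (Fin d → ℝ) = d := by
    simp [Module.finrank_fintype_fun_eq_card]
  have hhelly : (⋂ i ∈ s, F i).Nonempty := by
    apply Convex.helly_theorem' (𝕜 := ℝ)
    · intro i _
      match i with
      | none => exact ssq_convex_lt α
      | some j => exact hconv j
    · intro I hIs hIcard
      rw [hrank] at hIcard
      by_cases hnone : none ∈ I
      · -- I contains the open set
        set J : Finset (Option ι) := I.erase none with hJ
        have hJX : J ⊆ X.image some := by
          intro x hx
          have hxI := Finset.mem_of_mem_erase hx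
          have := hIs hxI
          rcases Finset.mem_insert.mp this with h | h
          · exact absurd h (Finset.ne_of_mem_erase hx)
          · exact h
        set Y' : Finset ι := X.filter (fun j => some j ∈ J) with hY'
        have hY'X : Y' ⊆ X := Finset.filter_subset _ _
        have hY'img : Y'.image some = J := by
          apply Finset.Subset.antisymm
          · intro x hx
            obtain ⟨j, hj, rfl⟩ := Finset.mem_image.mp hx
            exact (Finset.mem_filter.mp hj).2
          · intro x hx
            obtain ⟨j, hjX, rfl⟩ := Finset.mem_image.mp (hJX hx)
            exact Finset.mem_image_of_mem some (Finset.mem_filter.mpr ⟨hjX, hx⟩)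
        have hY'card : Y'.card ≤ d := by
          have h1 : Y'.card = J.card := by
            rw [← hY'img]; exact (Finset.card_image_of_injective _ (Option.some_injective ι)).symm
          have h2 : J.card = I.card - 1 := by
            rw [hJ]; exact Finset.card_erase_of_mem hnone
          omega
        obtain ⟨Y, hY'Y, hYX, hYcard⟩ := Finset.exists_subsuperset_card_eq hY'X hY'card
          (by omega : d ≤ X.card)
        obtain ⟨qY, hqYmem, hqYlt⟩ := hY Y hYX hYcard
        refine ⟨qY, Set.mem_biInter fun i hi => ?_⟩
        match i with
        | none => exact hqYlt
        | some j =>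
          have hiJ : some j ∈ J := Finset.mem_erase.mpr ⟨by simp, hi⟩
          have hjY' : j ∈ Y' := by
            have := hY'img ▸ hiJ
            rw [← hY'img] at hiJ
            obtain ⟨j', hj', hjj'⟩ := Finset.mem_image.mp hiJ
            have : j' = j := Option.some_injective ι hjj'
            exact this ▸ hj'
          exact Set.biInter_subset_of_mem (hY'Y hjY') hqYmem
      · -- I consists only of sets C' j, use qX
        refine ⟨qX, Set.mem_biInter fun i hi => ?_⟩
        have hiX : i ∈ X.image some := by
          rcases Finset.mem_insert.mp (hIs hi) with h | h
          · exact absurd (h ▸ hi) hnone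
          · exact h
        obtain ⟨j, hjX, rfl⟩ := Finset.mem_image.mp hiX
        exact Set.biInter_subset_of_mem hjX hqXmem
  obtain ⟨z, hz⟩ := hhelly
  have hzH : ssq d z < α := by
    have := Set.biInter_subset_of_mem (show none ∈ s from Finset.mem_insert_self _ _) hz
    exact this
  have hzKX : z ∈ ⋂ j ∈ X, C' j := by
    apply Set.mem_biInter
    intro j hj
    have : some j ∈ s := Finset.mem_insert_of_mem (Finset.mem_image_of_mem some hj)
    exact Set.biInter_subset_of_mem this hz
  exact absurd (hqXmin hzKX) (by simpa using hzH)


lemma pick2 {ι : Type*} [DecidableEq ι] {r : ℕ} (c : ι → Fin r) :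
    ∀ (n : ℕ) (A B : Finset ι), n ≤ B.card →
    ∃ T ⊆ B, T.card = n ∧
      min (((A ∪ B).image c).card) ((A.image c).card + n) ≤ ((A ∪ T).image c).card := by
  intro n
  induction n with
  | zero =>
    intro A B _
    exact ⟨∅, Finset.empty_subset B, Finset.card_empty, by simp⟩
  | succ n ih =>
    intro A B hB
    obtain ⟨T, hTB, hTcard, hTmin⟩ := ih A B (by omega)
    by_cases hfresh : ∃ x ∈ B, x ∉ T ∧ c x ∉ (A ∪ T).image c
    · obtain ⟨x, hxB, hxT, hxc⟩ := hfresh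
      refine ⟨insert x T, Finset.insert_subset hxB hTB, ?_, ?_⟩
      · rw [Finset.card_insert_of_notMem hxT, hTcard]
      · have himg : ((A ∪ insert x T).image c) = insert (c x) ((A ∪ T).image c) := by
          rw [Finset.union_insert, Finset.image_insert]
        rw [himg, Finset.card_insert_of_notMem hxc]
        omega
    · push_neg at hfresh
      -- all colors of B are already present in A ∪ T
      have himg_eq : ((A ∪ B).image c) = ((A ∪ T).image c) := by
        apply Finset.Subset.antisymm
        · intro y hy
          obtain ⟨x, hx, rfl⟩ := Finset.mem_image.mp hy
          rcases Finset.mem_union.mp hx with h | h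
          · exact Finset.mem_image_of_mem c (Finset.mem_union_left _ h)
          · by_cases hxT : x ∈ T
            · exact Finset.mem_image_of_mem c (Finset.mem_union_right _ hxT)
            · exact hfresh x h hxT
        · exact Finset.image_subset_image (Finset.union_subset_union_right hTB)
      have hx : ∃ x ∈ B, x ∉ T := by
        by_contra hcon
        push_neg at hcon
        have : B ⊆ T := hcon
        have := Finset.card_le_card this
        omega
      obtain ⟨x, hxB, hxT⟩ := hx
      refine ⟨insert x T, Finset.insert_subset hxB hTB, ?_, ?_⟩
      · rw [Finset.card_insert_of_notMem hxT, hTcard]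
      · have hmono : ((A ∪ T).image c).card ≤ ((A ∪ insert x T).image c).card :=
          Finset.card_le_card (Finset.image_subset_image
            (Finset.union_subset_union_right (Finset.subset_insert x T)))
        have : ((A ∪ B).image c).card ≤ ((A ∪ T).image c).card := le_of_eq (by rw [himg_eq])
        omega


/-- Extension of the Colorful Helly theorem for families of convex sets: if every
subfamily `{A₁,…,A_d,B₁,…,B_m}` colored with at least `k` colors has some intersecting
`{A₁,…,A_d,B_i}`, then some `r - k + 1` color classes have intersecting union. -/
theorem stmt_15 {ι : Type*} [Fintype ι] [DecidableEq ι]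
    (d r m k : ℕ) (hd : 1 ≤ d) (hr : d + 1 ≤ r) (hm1 : 1 ≤ m) (hmr : m ≤ r)
    (hmk : m ≤ k) (hk : k ≤ min (m + d) r)
    (C : ι → Set (Fin d → ℝ)) (hconv : ∀ i, Convex ℝ (C i))
    (c : ι → Fin r) (hc : Function.Surjective c)
    (hcard : max (m + d) r ≤ Fintype.card ι)
    (hyp : ∀ S T : Finset ι, Disjoint S T → S.card = d → T.card = m →
      k ≤ ((S ∪ T).image c).card →
      ∃ i ∈ T, (⋂ j ∈ insert i S, C j).Nonempty) :
    ∃ R : Finset (Fin r), R.card = r - k + 1 ∧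
      (⋂ (i : ι) (_ : c i ∈ R), C i).Nonempty := by
  classical
  have hkr : k ≤ r := le_trans hk (min_le_right _ _)
  have hkmd : k ≤ m + d := le_trans hk (min_le_left _ _)
  have hιmd : m + d ≤ Fintype.card ι := le_trans (le_max_left _ _) hcard
  have hιr : r ≤ Fintype.card ι := le_trans (le_max_right _ _) hcard
  -- the image of `univ` under `c` is everything
  have himguniv : (Finset.univ.image c) = Finset.univ := by
    apply Finset.eq_univ_iff_forall.mpr
    intro γ
    obtain ⟨i, rfl⟩ := hc γ
    exact Finset.mem_image_of_mem c (Finset.mem_univ i)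
  -- Step 1: every `d`-set with at least `k - m` colors has nonempty intersection
  have hypS : ∀ S : Finset ι, S.card = d → k ≤ m + (S.image c).card →
      (⋂ j ∈ S, C j).Nonempty := by
    intro S hScard hScol
    have hBcard : m ≤ (Finset.univ \ S).card := by
      rw [Finset.card_sdiff_of_subset (Finset.subset_univ S), Finset.card_univ]
      omega
    obtain ⟨T, hTB, hTcard, hTmin⟩ := pick2 c m S (Finset.univ \ S) hBcard
    have hdisjST : Disjoint S T := by
      rw [Finset.disjoint_left]
      intro x hxS hxT
      exact (Finset.mem_sdiff.mp (hTB hxT)).2 hxS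
    have hcolors : k ≤ ((S ∪ T).image c).card := by
      refine le_trans (le_min ?_ ?_) hTmin
      · rw [Finset.union_sdiff_of_subset (Finset.subset_univ S), himguniv,
          Finset.card_univ, Fintype.card_fin]
        exact hkr
      · omega
    obtain ⟨i, hiT, hint⟩ := hyp S T hdisjST hScard hTcard hcolors
    exact hint.mono (Set.biInter_mono (Finset.subset_insert i S) fun _ _ => Set.Subset.rfl)
  -- a `d`-set with enough colors containing a given point
  have hSexists : ∀ i : ι, ∃ S : Finset ι, i ∈ S ∧ S.card = d ∧ k ≤ m + (S.image c).card := by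
    intro i
    have hB : d - 1 ≤ (Finset.univ \ {i}).card := by
      rw [Finset.card_sdiff_of_subset (Finset.subset_univ _), Finset.card_univ, Finset.card_singleton]
      omega
    obtain ⟨T', hT'B, hT'card, hT'min⟩ := pick2 c (d - 1) {i} (Finset.univ \ {i}) hB
    refine ⟨{i} ∪ T', Finset.mem_union_left _ (Finset.mem_singleton_self i), ?_, ?_⟩
    · rw [Finset.card_union_of_disjoint, Finset.card_singleton, hT'card]
      · omega
      · rw [Finset.disjoint_left]
        intro x hx hxT'
        rw [Finset.mem_singleton] at hx
        exact (Finset.mem_sdiff.mp (hT'B hxT')).2 (by simp [hx])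
    · have : min (((({i} : Finset ι) ∪ (Finset.univ \ {i})).image c).card)
          ((({i} : Finset ι).image c).card + (d - 1)) ≤ ((({i} : Finset ι) ∪ T').image c).card :=
        hT'min
      rw [Finset.union_sdiff_of_subset (Finset.subset_univ _), himguniv,
        Finset.card_univ, Fintype.card_fin, Finset.image_singleton, Finset.card_singleton] at this
      have h1 : min r (1 + (d - 1)) = min r d := by omega
      rw [h1] at this
      have : min r d ≤ ((({i} : Finset ι) ∪ T').image c).card := this
      have hmin : k ≤ m + min r d := by omega
      omega
  -- Step 2: every `C i` is nonempty
  have hCne : ∀ i, (C i).Nonempty := by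
    intro i
    obtain ⟨S, hiS, hScard, hScol⟩ := hSexists i
    exact (hypS S hScard hScol).mono (Set.biInter_subset_of_mem hiS)
  -- Step 3: witnesses and compact convex inner approximations
  have hw : ∀ X : Finset ι, ∃ p : Fin d → ℝ,
      (⋂ j ∈ X, C j).Nonempty → p ∈ ⋂ j ∈ X, C j := by
    intro X
    by_cases h : (⋂ j ∈ X, C j).Nonempty
    · exact ⟨h.some, fun _ => h.some_mem⟩
    · exact ⟨fun _ => 0, fun h' => absurd h' h⟩
  choose w hwmem using hw
  set W : ι → Finset (Fin d → ℝ) := fun i =>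
    (Finset.univ.filter (fun X : Finset ι => i ∈ X ∧ (⋂ j ∈ X, C j).Nonempty)).image w with hW
  set C' : ι → Set (Fin d → ℝ) := fun i => convexHull ℝ (↑(W i)) with hC'
  have hC'conv : ∀ i, Convex ℝ (C' i) := fun i => convex_convexHull ℝ _
  have hC'comp : ∀ i, IsCompact (C' i) := fun i => (W i).finite_toSet.isCompact_convexHull (𝕜 := ℝ)
  have hC'sub : ∀ i, C' i ⊆ C i := by
    intro i
    apply convexHull_min _ (hconv i)
    intro x hx
    rw [Finset.mem_coe, hW] at hx
    obtain ⟨X, hX, rfl⟩ := Finset.mem_image.mp hx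
    obtain ⟨-, hiX, hXne⟩ := Finset.mem_filter.mp hX |>.imp id id
    have h2 := (Finset.mem_filter.mp hX).2
    exact Set.biInter_subset_of_mem h2.1 (hwmem X h2.2)
  have hnerve : ∀ X : Finset ι, (⋂ j ∈ X, C j).Nonempty ↔ (⋂ j ∈ X, C' j).Nonempty := by
    intro X
    constructor
    · intro hX
      refine ⟨w X, Set.mem_biInter fun j hjX => ?_⟩
      apply subset_convexHull ℝ _
      rw [Finset.mem_coe, hW]
      exact Finset.mem_image_of_mem w (Finset.mem_filter.mpr ⟨Finset.mem_univ X, hjX, hX⟩)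
    · intro hX
      exact hX.mono (Set.iInter₂_mono fun j _ => hC'sub j)
  -- Step 4: the extremal d-set
  set vfun : Finset ι → ℝ := fun S => sInf (ssq d '' (⋂ j ∈ S, C' j)) with hvfun
  have hvf : ∀ S : Finset ι, ∀ q, q ∈ (⋂ j ∈ S, C' j) →
      IsMinOn (ssq d) (⋂ j ∈ S, C' j) q → vfun S = ssq d q := by
    intro S q hq hqmin
    refine IsLeast.csInf_eq ⟨Set.mem_image_of_mem _ hq, ?_⟩
    rintro y ⟨z, hz, rfl⟩
    exact hqmin hz
  set ℛ : Finset (Finset ι) :=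
    Finset.univ.filter (fun S : Finset ι => S.card = d ∧ k ≤ m + (S.image c).card) with hℛ
  have hℛne : ℛ.Nonempty := by
    obtain ⟨i⟩ := Fintype.card_pos_iff.mp (lt_of_lt_of_le (by omega : 0 < m + d) hιmd)
    obtain ⟨S, _, hScard, hScol⟩ := hSexists i
    exact ⟨S, Finset.mem_filter.mpr ⟨Finset.mem_univ S, hScard, hScol⟩⟩
  obtain ⟨S₀, hS₀ℛ, hS₀max⟩ := Finset.exists_max_image ℛ vfun hℛne
  have hS₀card : S₀.card = d := (Finset.mem_filter.mp hS₀ℛ).2.1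
  have hS₀col : k ≤ m + (S₀.image c).card := (Finset.mem_filter.mp hS₀ℛ).2.2
  have hS₀ne : S₀.Nonempty := Finset.card_pos.mp (by omega)
  have hKS₀ne : (⋂ j ∈ S₀, C' j).Nonempty := (hnerve S₀).mp (hypS S₀ hS₀card hS₀col)
  obtain ⟨p, hpmem, hpmin⟩ := (biInter_compact C' hC'comp S₀ hS₀ne).exists_isMinOn hKS₀ne
    (ssq_continuous d).continuousOn
  -- Step 5: key lemma from maximality
  have hKL : ∀ i, i ∉ S₀ → k + 1 ≤ m + ((insert i S₀).image c).card →
      (⋂ j ∈ insert i S₀, C j).Nonempty → p ∈ C' i := by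
    intro i hiS₀ hicol hne'
    have hne'' : (⋂ j ∈ insert i S₀, C' j).Nonempty := (hnerve _).mp hne'
    have hXcard : (insert i S₀).card = d + 1 := by
      rw [Finset.card_insert_of_notMem hiS₀, hS₀card]
    obtain ⟨Y, hYX, hYcard, q, hqmemX, hqmin⟩ :=
      basisLemma hd C' hC'conv hC'comp _ hXcard hne''
    -- Y has at least k - m colors
    have hYcol : k ≤ m + (Y.image c).card := by
      have hsd : ((insert i S₀) \ Y).card = 1 := by
        rw [Finset.card_sdiff_of_subset hYX, hXcard, hYcard]
        omega
      obtain ⟨x, hx⟩ := Finset.card_eq_one.mp hsd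
      have hXsub : (insert i S₀) ⊆ insert x Y := by
        intro z hz
        by_cases hzY : z ∈ Y
        · exact Finset.mem_insert_of_mem hzY
        · have : z ∈ (insert i S₀) \ Y := Finset.mem_sdiff.mpr ⟨hz, hzY⟩
          rw [hx, Finset.mem_singleton] at this
          exact this ▸ Finset.mem_insert_self x Y
      have h1 : ((insert i S₀).image c).card ≤ ((insert x Y).image c).card :=
        Finset.card_le_card (Finset.image_subset_image hXsub)
      have h2 : ((insert x Y).image c).card ≤ (Y.image c).card + 1 := by
        rw [Finset.image_insert]
        exact Finset.card_insert_le _ _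
      omega
    have hYℛ : Y ∈ ℛ := Finset.mem_filter.mpr ⟨Finset.mem_univ Y, hYcard, hYcol⟩
    have hqKY : q ∈ ⋂ j ∈ Y, C' j :=
      (Set.biInter_mono hYX fun _ _ => Set.Subset.rfl) hqmemX
    have h1 : vfun Y = ssq d q := hvf Y q hqKY hqmin
    have h2 : vfun S₀ = ssq d p := hvf S₀ p hpmem hpmin
    have h3 : ssq d q ≤ ssq d p := by
      have := hS₀max Y hYℛ
      rw [h1, h2] at this
      exact this
    have hqS₀ : q ∈ ⋂ j ∈ S₀, C' j :=
      (Set.biInter_mono (Finset.subset_insert i S₀) fun _ _ => Set.Subset.rfl) hqmemX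
    have h4 : ssq d p ≤ ssq d q := hpmin hqS₀
    have hqmin' : IsMinOn (ssq d) (⋂ j ∈ S₀, C' j) q := by
      apply isMinOn_iff.mpr
      intro z hz
      calc ssq d q ≤ ssq d p := h3
        _ ≤ ssq d z := hpmin hz
    have hqp : q = p := ssq_min_unique (biInter_convex C' hC'conv S₀) hqS₀ hpmem hqmin' hpmin
    rw [← hqp]
    exact Set.biInter_subset_of_mem (Finset.mem_insert_self i S₀) hqmemX
  -- Step 6: the bad set and exclusion colors
  set Bad : Finset ι := Finset.univ.filter (fun i => p ∉ C' i) with hBad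
  have hBadS₀ : ∀ i ∈ Bad, i ∉ S₀ := by
    intro i hi hiS₀
    exact (Finset.mem_filter.mp hi).2 (Set.biInter_subset_of_mem hiS₀ hpmem)
  have hE : ∃ E : Finset (Fin r), E.card + 1 ≤ k ∧ ∀ i : ι, c i ∉ E → p ∈ C' i := by
    set s₀ := (S₀.image c).card with hs₀
    by_cases hcase : k + 1 ≤ s₀ + m
    · -- Case 1
      refine ⟨Bad.image c, ?_, ?_⟩
      · by_cases hBm : m ≤ Bad.card
        · by_contra hcon
          push_neg at hcon
          have hBcol : k ≤ (Bad.image c).card := by omega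
          obtain ⟨T, hTB, hTcard, hTmin⟩ := pick2 c m S₀ Bad hBm
          have hdisjT : Disjoint S₀ T := by
            rw [Finset.disjoint_left]
            intro x hxS hxT
            exact hBadS₀ x (hTB hxT) hxS
          have hcolors : k ≤ ((S₀ ∪ T).image c).card := by
            refine le_trans (le_min ?_ ?_) hTmin
            · exact le_trans hBcol (Finset.card_le_card
                (Finset.image_subset_image Finset.subset_union_right))
            · omega
          obtain ⟨i, hiT, hint⟩ := hyp S₀ T hdisjT hS₀card hTcard hcolors
          have hiBad := hTB hiT
          have hicol : k + 1 ≤ m + ((insert i S₀).image c).card := by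
            have : s₀ ≤ ((insert i S₀).image c).card :=
              Finset.card_le_card (Finset.image_subset_image (Finset.subset_insert i S₀))
            omega
          exact (Finset.mem_filter.mp hiBad).2 (hKL i (hBadS₀ i hiBad) hicol hint)
        · push_neg at hBm
          have := Finset.card_image_le (s := Bad) (f := c)
          omega
      · intro i hci
        by_contra hp
        exact hci (Finset.mem_image_of_mem c
          (Finset.mem_filter.mpr ⟨Finset.mem_univ i, hp⟩))
    · -- Case 2 : k = s₀ + m
      push_neg at hcase
      have hkeq : k = s₀ + m := by omega
      set FB : Finset ι := Bad.filter (fun i => c i ∉ S₀.image c) with hFB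
      have hFBprop : ∀ i ∈ FB, ¬ (⋂ j ∈ insert i S₀, C j).Nonempty := by
        intro i hi hne'
        have hiBad : i ∈ Bad := Finset.mem_of_mem_filter i hi
        have hifresh : c i ∉ S₀.image c := (Finset.mem_filter.mp hi).2
        have hicol : k + 1 ≤ m + ((insert i S₀).image c).card := by
          have : ((insert i S₀).image c).card = s₀ + 1 := by
            rw [Finset.image_insert, Finset.card_insert_of_notMem hifresh]
          omega
        exact (Finset.mem_filter.mp hiBad).2 (hKL i (hBadS₀ i hiBad) hicol hne')
      have hFBcol : (FB.image c).card + 1 ≤ m := by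
        by_contra hcon
        push_neg at hcon
        have hFBm : m ≤ (FB.image c).card := by omega
        have hFBcard : m ≤ FB.card := le_trans hFBm (Finset.card_image_le)
        obtain ⟨T, hTFB, hTcard, hTmin⟩ := pick2 c m ∅ FB hFBcard
        have hTcol : m ≤ (T.image c).card := by
          have h0 : ((∅ : Finset ι).image c).card = 0 := by simp
          have h1 : ((∅ : Finset ι) ∪ FB) = FB := by simp
          have h2 : ((∅ : Finset ι) ∪ T) = T := by simp
          rw [h1, h2, h0] at hTmin
          have : min ((FB.image c).card) m ≤ (T.image c).card := by
            simpa using hTmin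
          omega
        have hdisjT : Disjoint S₀ T := by
          rw [Finset.disjoint_left]
          intro x hxS hxT
          exact hBadS₀ x (Finset.mem_of_mem_filter x (hTFB hxT)) hxS
        have hcolors : k ≤ ((S₀ ∪ T).image c).card := by
          rw [Finset.image_union]
          have hdisjimg : Disjoint (S₀.image c) (T.image c) := by
            rw [Finset.disjoint_right]
            intro γ hγT hγS
            obtain ⟨x, hxT, rfl⟩ := Finset.mem_image.mp hγT
            exact (Finset.mem_filter.mp (hTFB hxT)).2 hγS
          rw [Finset.card_union_of_disjoint hdisjimg]
          omega
        obtain ⟨i, hiT, hint⟩ := hyp S₀ T hdisjT hS₀card hTcard hcolors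
        exact hFBprop i (hTFB hiT) hint
      refine ⟨S₀.image c ∪ FB.image c, ?_, ?_⟩
      · have := Finset.card_union_le (S₀.image c) (FB.image c)
        omega
      · intro i hci
        by_contra hp
        have hiBad : i ∈ Bad := Finset.mem_filter.mpr ⟨Finset.mem_univ i, hp⟩
        have hifresh : c i ∉ S₀.image c := fun h => hci (Finset.mem_union_left _ h)
        have hiFB : i ∈ FB := Finset.mem_filter.mpr ⟨hiBad, hifresh⟩
        exact hci (Finset.mem_union_right _ (Finset.mem_image_of_mem c hiFB))
  -- Step 7: assembly
  obtain ⟨E, hEcard, hEcov⟩ := hE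
  have hcompl : r - k + 1 ≤ Eᶜ.card := by
    rw [Finset.card_compl, Fintype.card_fin]
    omega
  obtain ⟨R, hRsub, hRcard⟩ := Finset.exists_subset_card_eq hcompl
  refine ⟨R, hRcard, p, ?_⟩
  apply Set.mem_iInter.mpr
  intro i
  apply Set.mem_iInter.mpr
  intro hci
  have : c i ∉ E := (Finset.mem_compl.mp (hRsub hci))
  exact hC'sub i (hEcov i this)
end

section
/- Let d ≥ 1 and m ≥ 1. Let P be a finite family of points in ℝ^d colored with d + m colors, such that the convex hull of each color class contains the origin. Then there exists a colorful set {u₁,…,u_d, v₁,…,v_m} ⊆ P (one point from each of the d+m color classes) such that 0 ∈ conv({u₁,…,u_d, v_i}) for every i ∈ [m]. -/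
open Finset

namespace CCaux

variable {d : ℕ}

/-- dot product on `Fin d → ℝ` -/
noncomputable def dotp (x y : Fin d → ℝ) : ℝ := ∑ i, x i * y i

lemma dotp_comm (x y : Fin d → ℝ) : dotp x y = dotp y x := by
  simp [dotp, mul_comm]

lemma dotp_self_nonneg (x : Fin d → ℝ) : 0 ≤ dotp x x :=
  Finset.sum_nonneg fun i _ => mul_self_nonneg _

lemma dotp_self_eq_zero {x : Fin d → ℝ} : dotp x x = 0 ↔ x = 0 := by
  constructor
  · intro h
    funext j
    have h2 := (Finset.sum_eq_zero_iff_of_nonneg (fun i _ => mul_self_nonneg (x i))).1 h j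
      (Finset.mem_univ j)
    have : x j = 0 := by nlinarith
    simpa using this
  · intro h; simp [h, dotp]

lemma dotp_self_pos {x : Fin d → ℝ} (hx : x ≠ 0) : 0 < dotp x x :=
  lt_of_le_of_ne (dotp_self_nonneg x) (fun h => hx (dotp_self_eq_zero.1 h.symm))

lemma continuous_dotp_self : Continuous fun x : Fin d → ℝ => dotp x x := by
  unfold dotp
  exact continuous_finset_sum _ fun i _ => (continuous_apply i).mul (continuous_apply i)

lemma dotp_smul_smul (a b : ℝ) (x y : Fin d → ℝ) :
    dotp (a • x) (b • y) = (a * b) * dotp x y := by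
  simp only [dotp, Pi.smul_apply, smul_eq_mul, Finset.mul_sum]
  exact Finset.sum_congr rfl fun i _ => by ring

lemma dotp_add_right (x y z : Fin d → ℝ) :
    dotp x (y + z) = dotp x y + dotp x z := by
  simp [dotp, mul_add, Finset.sum_add_distrib]

lemma dotp_add_left (x y z : Fin d → ℝ) :
    dotp (x + y) z = dotp x z + dotp y z := by
  simp [dotp, add_mul, Finset.sum_add_distrib]

/-- Moving from `w` towards a point `y` in the nonpositive half-space strictly
decreases the squared norm. -/
lemma segment_decrease {w y : Fin d → ℝ} (hw : 0 < dotp w w) (hy : dotp y w ≤ 0) :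
    ∃ z ∈ segment ℝ w y, dotp z z < dotp w w := by
  set A := dotp w w with hA
  set B := dotp y y with hB
  have hB0 : 0 ≤ B := dotp_self_nonneg y
  set s : ℝ := A / (A + B + 1) with hs
  have hden : 0 < A + B + 1 := by linarith
  have hs0 : 0 < s := div_pos hw hden
  have hs1 : s < 1 := by
    rw [div_lt_one hden]; linarith
  refine ⟨(1 - s) • w + s • y, ⟨1 - s, s, by linarith, le_of_lt hs0, by ring, rfl⟩, ?_⟩
  have expand : dotp ((1 - s) • w + s • y) ((1 - s) • w + s • y)
      = (1-s)^2 * A + 2 * ((1-s)*s) * dotp w y + s^2 * B := by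
    rw [dotp_add_left, dotp_add_right, dotp_add_right, dotp_smul_smul, dotp_smul_smul,
      dotp_smul_smul, dotp_smul_smul, dotp_comm y w, ← hA, ← hB]
    ring
  rw [expand]
  have hwy : dotp w y ≤ 0 := by rw [dotp_comm]; exact hy
  have h1s : 0 < 1 - s := by linarith
  have key : (1-s)^2 * A + s^2 * B < A := by
    have hsv : s * (A + B + 1) = A := by
      rw [hs, div_mul_cancel₀ A (ne_of_gt hden)]
    nlinarith [sq_nonneg s, sq_nonneg (1-s), mul_pos hs0 h1s]
  have mid : 2 * ((1-s)*s) * dotp w y ≤ 0 :=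
    mul_nonpos_of_nonneg_of_nonpos (by nlinarith) hwy
  linarith

/-- If `0` is in the convex hull of `S`, some point of `S` lies in the half-space
`⟨·, w⟩ ≤ 0`. -/
lemma exists_dotp_nonpos {S : Set (Fin d → ℝ)} (hS : (0 : Fin d → ℝ) ∈ convexHull ℝ S)
    (w : Fin d → ℝ) : ∃ y ∈ S, dotp y w ≤ 0 := by
  by_contra h
  push_neg at h
  have hlin : IsLinearMap ℝ (fun y : Fin d → ℝ => dotp y w) := by
    constructor
    · intro x y; simp [dotp, add_mul, Finset.sum_add_distrib]
    · intro a x; simp [dotp, Finset.mul_sum, mul_assoc]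
  have hconv : Convex ℝ {y : Fin d → ℝ | 0 < dotp y w} := convex_halfSpace_gt hlin 0
  have : (0 : Fin d → ℝ) ∈ {y : Fin d → ℝ | 0 < dotp y w} :=
    convexHull_min (fun y hy => h y hy) hconv hS
  simp [dotp] at this

/-- A point of minimal squared norm in the hull of `d + 1` points in `ℝ^d`, if nonzero,
lies in the hull of `d` of the points. -/
lemma lemA (t : Finset (Fin d → ℝ)) (hcard : t.card = d + 1)
    {w : Fin d → ℝ} (hw : w ∈ convexHull ℝ (t : Set (Fin d → ℝ)))
    (hmin : ∀ z ∈ convexHull ℝ (t : Set (Fin d → ℝ)), dotp w w ≤ dotp z z)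
    (hw0 : w ≠ 0) :
    ∃ x ∈ t, w ∈ convexHull ℝ ((t.erase x : Finset (Fin d → ℝ)) : Set (Fin d → ℝ)) := by
  classical
  obtain ⟨lam, hlam0, hlam1, hlamw⟩ := (Finset.mem_convexHull').1 hw
  have key : ∀ l : (Fin d → ℝ) → ℝ, (∀ y ∈ t, 0 ≤ l y) → (∑ y ∈ t, l y = 1) →
      (∑ y ∈ t, l y • y = w) → ∀ x ∈ t, l x = 0 →
      w ∈ convexHull ℝ ((t.erase x : Finset (Fin d → ℝ)) : Set (Fin d → ℝ)) := by
    intro l h0 h1 hvec x hx hlx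
    apply Finset.mem_convexHull'.2
    refine ⟨l, fun y hy => h0 y (Finset.mem_of_mem_erase hy), ?_, ?_⟩
    · rw [Finset.sum_erase _ hlx]; exact h1
    · rw [Finset.sum_erase _ (by simp [hlx])]; exact hvec
  by_cases hex : ∃ x ∈ t, lam x = 0
  · obtain ⟨x, hx, hlx⟩ := hex
    exact ⟨x, hx, key lam hlam0 hlam1 hlamw x hx hlx⟩
  push_neg at hex
  have hpos : ∀ x ∈ t, 0 < lam x := fun x hx => lt_of_le_of_ne (hlam0 x hx) (Ne.symm (hex x hx))
  -- lifted vectors are linearly dependent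
  set V : Option {x // x ∈ t} → (Fin d → ℝ) × ℝ :=
    fun o => o.elim ((0 : Fin d → ℝ), (1:ℝ)) (fun x => (x.1, 1)) with hV
  have hnli : ¬ LinearIndependent ℝ V := by
    intro h
    have hle := h.fintype_card_le_finrank
    have h1 : Fintype.card (Option {x // x ∈ t}) = d + 2 := by
      simp [Fintype.card_option, Fintype.card_coe, hcard]
    have h2 : Module.finrank ℝ ((Fin d → ℝ) × ℝ) = d + 1 := by
      simp [Module.finrank_prod, Module.finrank_fintype_fun_eq_card, Module.finrank_self]
    omega
  obtain ⟨g, hg, i0, hi0⟩ := Fintype.not_linearIndependent_iff.1 hnli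
  have hvecg : ∑ x : {x // x ∈ t}, g (some x) • (x : Fin d → ℝ) = 0 := by
    have h1 := congrArg Prod.fst hg
    rw [Prod.fst_sum] at h1
    simpa [V, Fintype.sum_option] using h1
  have hsumg : g none + ∑ x : {x // x ∈ t}, g (some x) = 0 := by
    have h1 := congrArg Prod.snd hg
    rw [Prod.snd_sum] at h1
    simpa [V, Fintype.sum_option, smul_eq_mul] using h1
  set mu : (Fin d → ℝ) → ℝ := fun y => if h : y ∈ t then g (some ⟨y, h⟩) else 0 with hmu
  have hmuvec : ∑ y ∈ t, mu y • y = 0 := by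
    rw [← hvecg, ← Finset.sum_coe_sort t (fun y => mu y • y)]
    exact Finset.sum_congr rfl (fun x _ => by simp [mu, x.2])
  have hmusum : ∑ y ∈ t, mu y = ∑ x : {x // x ∈ t}, g (some x) := by
    rw [← Finset.sum_coe_sort t mu]
    exact Finset.sum_congr rfl (fun x _ => by simp [mu, x.2])
  by_cases hs0 : ∑ y ∈ t, mu y = 0
  · -- affine dependence: push a coefficient to zero
    have hmune : ∃ x ∈ t, 0 < mu x := by
      by_contra hall
      push_neg at hall
      have hzero : ∀ y ∈ t, mu y = 0 :=
        (Finset.sum_eq_zero_iff_of_nonpos (fun y hy => hall y hy)).1 hs0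
      cases i0 with
      | none =>
        apply hi0
        have : g none = 0 := by rw [hmusum] at hs0; linarith [hsumg]
        exact this
      | some x =>
        apply hi0
        have := hzero x.1 x.2
        simpa [mu, x.2] using this
    obtain ⟨x1, hx1t, hx1⟩ := hmune
    obtain ⟨x0, hx0mem, hx0min⟩ := (t.filter (fun y => 0 < mu y)).exists_min_image
        (fun y => lam y / mu y) ⟨x1, by simp [hx1t, hx1]⟩
    rw [Finset.mem_filter] at hx0mem
    set r := lam x0 / mu x0 with hr
    have hr0 : 0 ≤ r := div_nonneg (hlam0 _ hx0mem.1) (le_of_lt hx0mem.2)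
    set l := fun y => lam y - r * mu y with hl
    have hl0 : ∀ y ∈ t, 0 ≤ l y := by
      intro y hy
      rcases le_or_gt (mu y) 0 with h | h
      · have h2 : r * mu y ≤ 0 := mul_nonpos_of_nonneg_of_nonpos hr0 h
        have h3 := hlam0 y hy
        simp only [l]; linarith
      · have hle := hx0min y (Finset.mem_filter.2 ⟨hy, h⟩)
        rw [le_div_iff₀ h] at hle
        simp only [l]; linarith
    have hl1 : ∑ y ∈ t, l y = 1 := by
      simp [l, Finset.sum_sub_distrib, ← Finset.mul_sum, hs0, hlam1]
    have hlvec : ∑ y ∈ t, l y • y = w := by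
      simp only [l, sub_smul, mul_smul, Finset.sum_sub_distrib, hlamw, ← Finset.smul_sum,
        hmuvec, smul_zero, sub_zero]
    have hlx0 : l x0 = 0 := by
      have : mu x0 ≠ 0 := ne_of_gt hx0mem.2
      simp only [l, hr]; field_simp; ring
    exact ⟨x0, hx0mem.1, key l hl0 hl1 hlvec x0 hx0mem.1 hlx0⟩
  · -- 0 is an affine combination of the points: contradict minimality
    exfalso
    set s0 := ∑ y ∈ t, mu y with hs0d
    set nu := fun y => mu y / s0 with hnu
    have hnu1 : ∑ y ∈ t, nu y = 1 := by
      rw [← Finset.sum_div]; field_simp; exact hs0d.symm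
    have hnuvec : ∑ y ∈ t, nu y • y = 0 := by
      simp only [nu, div_eq_inv_mul, mul_smul, ← Finset.smul_sum, hmuvec, smul_zero]
    have htne : t.Nonempty := by rw [← Finset.card_pos, hcard]; omega
    obtain ⟨ym, hymt, hym⟩ := t.exists_min_image lam htne
    obtain ⟨yM, hyMt, hyM⟩ := t.exists_max_image (fun y => |nu y|) htne
    set A := lam ym with hA
    set M := |nu yM| with hM
    have hA0 : 0 < A := hpos ym hymt
    have hM0 : 0 ≤ M := abs_nonneg _
    set e := A / (2*A + M) with he
    have hden : 0 < 2*A + M := by linarith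
    have he0 : 0 < e := div_pos hA0 hden
    have he1 : e < 1 := by rw [he, div_lt_one hden]; linarith
    have hkey : 0 ≤ (1-e)*A - e*M := by
      have hev : e * (2*A + M) = A := by rw [he]; field_simp
      nlinarith
    set l := fun y => (1-e) * lam y + e * nu y with hl
    have hl0 : ∀ y ∈ t, 0 ≤ l y := by
      intro y hy
      have h1 : A ≤ lam y := hym y hy
      have h2 : -M ≤ nu y := neg_le_of_abs_le (hyM y hy)
      have h3 : (1-e)*A - e*M ≤ l y := by
        simp only [l]; nlinarith
      linarith
    have hl1 : ∑ y ∈ t, l y = 1 := by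
      simp [l, Finset.sum_add_distrib, ← Finset.mul_sum, hlam1, hnu1]
    have hlvec : ∑ y ∈ t, l y • y = (1-e) • w := by
      simp only [l, add_smul, mul_smul, Finset.sum_add_distrib, ← Finset.smul_sum, hlamw,
        hnuvec, smul_zero, add_zero]
    have hmem : (1-e) • w ∈ convexHull ℝ (t : Set (Fin d → ℝ)) :=
      Finset.mem_convexHull'.2 ⟨l, hl0, hl1, hlvec⟩
    have hQ : dotp ((1-e)•w) ((1-e)•w) = (1-e)^2 * dotp w w := by
      rw [dotp_smul_smul]; ring
    have hQw : 0 < dotp w w := dotp_self_pos hw0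
    have hc := hmin _ hmem
    rw [hQ] at hc
    nlinarith [mul_pos (mul_pos he0 (by linarith : (0:ℝ) < 2 - e)) hQw]

end CCaux

open CCaux in
/-- Colorful Carathéodory-type theorem: if points are colored with `d + m` colors and
the convex hull of each color class contains `0`, then there is a colorful choice
`u₁,…,u_d,v₁,…,v_m` (one point of each color) with `0 ∈ conv{u₁,…,u_d,v_i}` for all `i`. -/
theorem stmt_16 {ι : Type*} [Fintype ι]
    (d m : ℕ) (hd : 1 ≤ d) (hm : 1 ≤ m)
    (p : ι → (Fin d → ℝ)) (c : ι → Fin (d + m)) (hc : Function.Surjective c)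
    (hyp : ∀ j : Fin (d + m), (0 : Fin d → ℝ) ∈ convexHull ℝ (p '' {i | c i = j})) :
    ∃ (f : Fin (d + m) → ι) (T : Finset (Fin (d + m))),
      (∀ j, c (f j) = j) ∧ T.card = d ∧
      ∀ j ∉ T, (0 : Fin d → ℝ) ∈
        convexHull ℝ ((fun j' => p (f j')) '' (insert j (↑T : Set (Fin (d + m))))) := by
  classical
  -- configurations: a colorful selection together with a base set of `d` colors
  let G := {g : Fin (d + m) → ι // ∀ j, c (g j) = j}
  let TT := {T : Finset (Fin (d + m)) // T.card = d}
  haveI hGne : Nonempty G := ⟨⟨fun j => (hc j).choose, fun j => (hc j).choose_spec⟩⟩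
  haveI hTTne : Nonempty TT := by
    obtain ⟨T, -, hT⟩ := Finset.exists_subset_card_eq
      (s := (Finset.univ : Finset (Fin (d+m)))) (n := d) (by simp)
    exact ⟨⟨T, hT⟩⟩
  let Sb : G × TT → Set (Fin d → ℝ) := fun gt => (fun j' => p (gt.1.1 j')) '' ↑gt.2.1
  have hSbfin : ∀ gt, (Sb gt).Finite := fun gt => (gt.2.1.finite_toSet).image _
  have hSbne : ∀ gt, (Sb gt).Nonempty := by
    intro gt
    have h1 : gt.2.1.Nonempty := Finset.card_pos.1 (by rw [gt.2.2]; omega)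
    obtain ⟨x, hx⟩ := h1
    exact ⟨_, Set.mem_image_of_mem _ hx⟩
  have hminex : ∀ gt : G × TT, ∃ w, w ∈ convexHull ℝ (Sb gt) ∧
      ∀ z ∈ convexHull ℝ (Sb gt), dotp w w ≤ dotp z z := by
    intro gt
    obtain ⟨x, hx⟩ := hSbne gt
    obtain ⟨w, hw, hwmin⟩ := ((hSbfin gt).isCompact_convexHull (𝕜 := ℝ)).exists_isMinOn
      ⟨x, subset_convexHull ℝ _ hx⟩ (continuous_dotp_self.continuousOn)
    exact ⟨w, hw, fun z hz => hwmin hz⟩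
  choose wf hwmem hwmin using hminex
  obtain ⟨gt0, hgt0⟩ := Finite.exists_min (fun gt => dotp (wf gt) (wf gt))
  set w := wf gt0 with hwdef
  by_cases hw0 : w = 0
  · refine ⟨gt0.1.1, gt0.2.1, gt0.1.2, gt0.2.2, ?_⟩
    intro j hj
    have h0 : (0 : Fin d → ℝ) ∈ convexHull ℝ (Sb gt0) := hw0 ▸ hwmem gt0
    refine convexHull_mono ?_ h0
    exact Set.image_mono (Set.subset_insert _ _)
  · have hQw : 0 < dotp w w := dotp_self_pos hw0
    have main : ∀ j ∉ gt0.2.1, ∃ i : ι, c i = j ∧ (0 : Fin d → ℝ) ∈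
        convexHull ℝ ((fun j' => p (Function.update gt0.1.1 j i j')) ''
          (insert j (↑gt0.2.1 : Set (Fin (d + m))))) := by
      intro j hj
      obtain ⟨y0, hy0S, hy0w⟩ := exists_dotp_nonpos (hyp j) w
      obtain ⟨iy, hiymem0, rfl⟩ := hy0S
      have hiy : c iy = j := hiymem0
      set g' : Fin (d + m) → ι := Function.update gt0.1.1 j iy with hg'
      have hg'c : ∀ j', c (g' j') = j' := by
        intro j'
        by_cases h : j' = j
        · subst h; simp [g', Function.update_self, hiy]
        · simp [g', Function.update_of_ne h, gt0.1.2 j']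
      set s : Finset (Fin (d + m)) := insert j gt0.2.1 with hs
      set u : Fin (d + m) → (Fin d → ℝ) := fun j' => p (g' j') with hu
      have hscard : s.card = d + 1 := by
        rw [hs, Finset.card_insert_of_notMem hj, gt0.2.2]
      have hbase : u '' ↑gt0.2.1 = Sb gt0 := by
        apply Set.image_congr
        intro t ht
        have htj : t ≠ j := fun h => hj (h ▸ ht)
        simp [u, g', Function.update_of_ne htj]
      have hsetcoe : (↑s : Set (Fin (d + m))) = insert j (↑gt0.2.1 : Set (Fin (d + m))) := by
        simp [hs]
      have hCsub : convexHull ℝ (Sb gt0) ⊆ convexHull ℝ (u '' ↑s) := by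
        apply convexHull_mono
        rw [← hbase, hsetcoe]
        exact Set.image_mono (Set.subset_insert _ _)
      have hwC : w ∈ convexHull ℝ (u '' ↑s) := hCsub (hwmem gt0)
      have hy0C : p iy ∈ convexHull ℝ (u '' ↑s) := by
        apply subset_convexHull
        exact ⟨j, by simp [hs], by simp [u, g']⟩
      obtain ⟨z, hzseg, hzQ⟩ := segment_decrease hQw hy0w
      have hzC : z ∈ convexHull ℝ (u '' ↑s) :=
        (convex_convexHull ℝ _).segment_subset hwC hy0C hzseg
      have hfin : (u '' (↑s : Set (Fin (d + m)))).Finite := s.finite_toSet.image _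
      obtain ⟨w', hw'mem, hw'min'⟩ := (hfin.isCompact_convexHull (𝕜 := ℝ)).exists_isMinOn
        ⟨w, hwC⟩ continuous_dotp_self.continuousOn
      have hw'min : ∀ z' ∈ convexHull ℝ (u '' (↑s : Set (Fin (d + m)))),
          dotp w' w' ≤ dotp z' z' := fun z' hz' => hw'min' hz'
      by_cases hw'0 : w' = 0
      · refine ⟨iy, hiy, ?_⟩
        rw [← hw'0]
        have : u '' (↑s : Set (Fin (d + m))) =
            (fun j' => p (Function.update gt0.1.1 j iy j')) ''
              (insert j (↑gt0.2.1 : Set (Fin (d + m)))) := by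
          rw [hsetcoe]
        rw [← this]
        exact hw'mem
      · exfalso
        have hQw' : 0 < dotp w' w' := dotp_self_pos hw'0
        have hw'lt : dotp w' w' < dotp w w := lt_of_le_of_lt (hw'min z hzC) hzQ
        have hk : ∃ k ∈ s, w' ∈ convexHull ℝ (u '' ↑(s.erase k)) := by
          by_cases hinj : Set.InjOn u ↑s
          · set tf : Finset (Fin d → ℝ) := s.image u with htf
            have htfcard : tf.card = d + 1 := by
              rw [htf, Finset.card_image_of_injOn hinj, hscard]
            have hcoe2 : (tf : Set (Fin d → ℝ)) = u '' ↑s := by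
              simp [htf, Finset.coe_image]
            obtain ⟨x, hxtf, hxw⟩ := lemA tf htfcard (by rw [hcoe2]; exact hw'mem)
              (by rw [hcoe2]; exact hw'min) hw'0
            obtain ⟨k, hkmem, hkx⟩ := Finset.mem_image.1 hxtf
            refine ⟨k, hkmem, convexHull_mono ?_ hxw⟩
            intro y hy
            rw [Finset.mem_coe, Finset.mem_erase] at hy
            obtain ⟨k', hk', hk'y⟩ := Finset.mem_image.1 hy.2
            refine ⟨k', ?_, hk'y⟩
            rw [Finset.mem_coe, Finset.mem_erase]
            exact ⟨fun hh => hy.1 (by rw [← hk'y, hh, hkx]), hk'⟩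
          · rw [Set.InjOn] at hinj
            push_neg at hinj
            obtain ⟨a, ha, b, hb, hab, hne⟩ := hinj
            refine ⟨a, ha, ?_⟩
            have himg : u '' ↑s ⊆ u '' ↑(s.erase a) := by
              rintro y ⟨k', hk', rfl⟩
              by_cases h : k' = a
              · refine ⟨b, ?_, ?_⟩
                · rw [Finset.mem_coe, Finset.mem_erase]
                  exact ⟨fun hh => hne hh.symm, hb⟩
                · rw [← hab, h]
              · refine ⟨k', ?_, rfl⟩
                rw [Finset.mem_coe, Finset.mem_erase]
                exact ⟨h, hk'⟩
            exact convexHull_mono himg hw'mem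
        obtain ⟨k, hks, hkw⟩ := hk
        by_cases hkj : k = j
        · subst hkj
          have herase : s.erase k = gt0.2.1 := by rw [hs]; exact Finset.erase_insert hj
          rw [herase, hbase] at hkw
          exact absurd (hwmin gt0 w' hkw) (not_le.2 hw'lt)
        · have hkT : k ∈ gt0.2.1 := by
            rcases Finset.mem_insert.1 (hs ▸ hks) with h | h
            · exact absurd h hkj
            · exact h
          set T' : Finset (Fin (d + m)) := insert j (gt0.2.1.erase k) with hT'
          have hjT' : j ∉ gt0.2.1.erase k := fun h => hj (Finset.mem_of_mem_erase h)
          have hd1 : 1 ≤ gt0.2.1.card := Finset.card_pos.2 ⟨k, hkT⟩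
          have hT'card : T'.card = d := by
            rw [hT', Finset.card_insert_of_notMem hjT', Finset.card_erase_of_mem hkT, gt0.2.2]
            omega
          have hsT' : s.erase k = T' := by
            rw [hs, hT', Finset.erase_insert_of_ne (Ne.symm hkj)]
          set gt' : G × TT := (⟨g', hg'c⟩, ⟨T', hT'card⟩) with hgt'
          have hw'mem' : w' ∈ convexHull ℝ (Sb gt') := by
            have : Sb gt' = u '' ↑T' := rfl
            rw [this, ← hsT']
            exact hkw
          have h1 : dotp (wf gt') (wf gt') ≤ dotp w' w' := hwmin gt' w' hw'mem'
          have h2 := hgt0 gt'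
          exact absurd (lt_of_le_of_lt h1 hw'lt) (not_lt.2 h2)
    choose iy hiyc hiymem using main
    refine ⟨fun j' => if h : j' ∈ gt0.2.1 then gt0.1.1 j' else iy j' h, gt0.2.1, ?_, gt0.2.2, ?_⟩
    · intro j'
      by_cases h : j' ∈ gt0.2.1
      · simp only [dif_pos h]; exact gt0.1.2 j'
      · simp only [dif_neg h]; exact hiyc j' h
    · intro j hj
      have heq : ((fun j' => p ((fun j'' => if h : j'' ∈ gt0.2.1 then gt0.1.1 j'' else iy j'' h) j')) ''
            (insert j (↑gt0.2.1 : Set (Fin (d + m)))))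
          = ((fun j' => p (Function.update gt0.1.1 j (iy j hj) j')) ''
            (insert j (↑gt0.2.1 : Set (Fin (d + m))))) := by
        apply Set.image_congr
        intro x hx
        rcases Set.mem_insert_iff.1 hx with rfl | hx2
        · simp [hj, Function.update_self]
        · have hxj : x ≠ j := fun hh => hj (hh ▸ hx2)
          rw [Finset.mem_coe] at hx2
          simp [hx2, Function.update_of_ne hxj]
      rw [heq]
      exact hiymem j hj
end
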